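/- arXiv:2004.11100 — 13 statements merged into one kernel-verified Lean document; each statement's English description precedes it below -/
import Mathlib

section
/- Let λ > 0 and let θ_λ ∈ (0, π/2) be the unique angle with tan θ_λ = 1/λ. Let μ_L be a real-valued function defined on an interval I ⊆ (θ_λ − π/2, θ_λ + π/2), and let φ ∈ I with φ ∉ {0, π/2} satisfy μ_L(φ) = μ_G(φ). Suppose a ∈ ℝ with a ≠ 1 satisfies a/(1 − a) = μ_L(φ) cos φ / sin² φ, and define a' := (1 − a) μ_L(φ)/(λ sin φ). Then a' ≠ −1 and (φ, a, a') satisfies all three equations of the simplified BEM system; in particular tan φ = (1 − a)/(λ(1 + a')). -/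
open Real Set

/-- Reciprocal of the reformulation for the simplified BEM model:
if `φ` solves `μ_L(φ) = μ_G(φ)`, `a` solves equation (ii), and `a'` is defined via (iii),
then `a' ≠ -1` and `(φ, a, a')` solves the whole simplified system. -/
theorem bem_simplified_sufficiency
    (lam θ : ℝ) (hlam : 0 < lam) (hθ : θ ∈ Ioo 0 (π / 2))
    (htan : Real.tan θ = 1 / lam)
    (I : Set ℝ) (hI : I ⊆ Ioo (θ - π / 2) (θ + π / 2))
    (μL : ℝ → ℝ) (φ a a' : ℝ)
    (hφI : φ ∈ I) (hφ0 : φ ≠ 0) (hφpi : φ ≠ π / 2)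
    (hmu : μL φ = Real.sin φ * Real.tan (θ - φ))
    (ha : a ≠ 1)
    (h2 : a / (1 - a) = μL φ * Real.cos φ / Real.sin φ ^ 2)
    (ha'def : a' = (1 - a) * μL φ / (lam * Real.sin φ)) :
    a' ≠ -1 ∧
    Real.tan φ = (1 - a) / (lam * (1 + a')) ∧
    a / (1 - a) = μL φ * Real.cos φ / Real.sin φ ^ 2 ∧
    a' / (1 - a) = μL φ / (lam * Real.sin φ) := by
  have hπ := Real.pi_pos
  obtain ⟨hφ1, hφ2⟩ := hI hφI
  obtain ⟨hθ1, hθ2⟩ := hθ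
  have hsθ : 0 < Real.sin θ := Real.sin_pos_of_pos_of_lt_pi hθ1 (by linarith)
  have hcθ : 0 < Real.cos θ := Real.cos_pos_of_mem_Ioo ⟨by linarith, hθ2⟩
  have hC : 0 < Real.cos (θ - φ) := Real.cos_pos_of_mem_Ioo ⟨by linarith, by linarith⟩
  have ha1 : (1 : ℝ) - a ≠ 0 := sub_ne_zero.mpr (Ne.symm ha)
  have hlamne : lam ≠ 0 := ne_of_gt hlam
  have hsφ : Real.sin φ ≠ 0 := by
    intro h
    exact hφ0 ((Real.sin_eq_zero_iff_of_lt_of_lt (by linarith) (by linarith)).mp h)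
  have hcφ : Real.cos φ ≠ 0 := by
    intro h
    rcases Real.cos_eq_zero_iff.mp h with ⟨n, hn⟩
    have hb1 : (-1 : ℝ) < 2 * (n : ℝ) + 1 := by nlinarith
    have hb2 : (2 * (n : ℝ) + 1) < 2 := by nlinarith
    have hn1 : (-1 : ℤ) < n := by exact_mod_cast (by linarith : (-1 : ℝ) < (n : ℝ))
    have hn2 : (n : ℤ) < 1 := by exact_mod_cast (by linarith : ((n : ℝ)) < 1)
    have hn0 : n = 0 := by omega
    apply hφpi
    rw [hn, hn0]
    push_cast
    ring
  have hQ : lam * Real.sin θ = Real.cos θ := by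
    rw [Real.tan_eq_sin_div_cos] at htan
    field_simp at htan
    linarith
  have hT : Real.sin θ = Real.sin φ * Real.cos (θ - φ) + Real.cos φ * Real.sin (θ - φ) := by
    have h := Real.sin_add φ (θ - φ)
    rw [show φ + (θ - φ) = θ by ring] at h
    exact h
  have hQ2 : Real.cos θ = Real.cos φ * Real.cos (θ - φ) - Real.sin φ * Real.sin (θ - φ) := by
    have h := Real.cos_add φ (θ - φ)
    rw [show φ + (θ - φ) = θ by ring] at h
    exact h
  have hμC : μL φ * Real.cos (θ - φ) = Real.sin φ * Real.sin (θ - φ) := by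
    rw [hmu, Real.tan_eq_sin_div_cos]
    field_simp
  have h2' : a * Real.sin φ ^ 2 = (1 - a) * (μL φ * Real.cos φ) := by
    field_simp at h2
    linarith
  have h2c : a * Real.sin φ * Real.cos (θ - φ) = (1 - a) * Real.sin (θ - φ) * Real.cos φ := by
    have key : Real.sin φ * (a * Real.sin φ * Real.cos (θ - φ)) =
        Real.sin φ * ((1 - a) * Real.sin (θ - φ) * Real.cos φ) := by
      linear_combination Real.cos (θ - φ) * h2' + (1 - a) * Real.cos φ * hμC
    exact mul_left_cancel₀ hsφ key
  have ha'ls : a' * (lam * Real.sin φ) = (1 - a) * μL φ := by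
    rw [ha'def]
    field_simp
  have ha'C : a' * lam * Real.cos (θ - φ) = (1 - a) * Real.sin (θ - φ) := by
    have key : Real.sin φ * (a' * lam * Real.cos (θ - φ)) =
        Real.sin φ * ((1 - a) * Real.sin (θ - φ)) := by
      linear_combination Real.cos (θ - φ) * ha'ls + (1 - a) * hμC
    exact mul_left_cancel₀ hsφ key
  have hE1 : (1 - a) * Real.sin θ = Real.sin φ * Real.cos (θ - φ) := by
    linear_combination (1 - a) * hT - h2c
  have hE2 : lam * (1 + a') * Real.sin θ = Real.cos (θ - φ) * Real.cos φ := by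
    have key : Real.cos (θ - φ) * (lam * (1 + a') * Real.sin θ) =
        Real.cos (θ - φ) * (Real.cos (θ - φ) * Real.cos φ) := by
      linear_combination Real.cos (θ - φ) * hQ + Real.sin θ * ha'C +
        Real.sin (θ - φ) * hE1 + Real.cos (θ - φ) * hQ2
    exact mul_left_cancel₀ (ne_of_gt hC) key
  have h1a' : 1 + a' ≠ 0 := by
    intro h
    have h0 : Real.cos (θ - φ) * Real.cos φ = 0 := by
      rw [← hE2, h]
      ring
    rcases mul_eq_zero.mp h0 with h' | h'
    · exact (ne_of_gt hC) h'
    · exact hcφ h'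
  refine ⟨fun h => h1a' (by rw [h]; ring), ?_, h2, ?_⟩
  · rw [Real.tan_eq_sin_div_cos, div_eq_div_iff hcφ (mul_ne_zero hlamne h1a')]
    have key : Real.sin θ * (Real.sin φ * (lam * (1 + a'))) =
        Real.sin θ * ((1 - a) * Real.cos φ) := by
      linear_combination Real.sin φ * hE2 - Real.cos φ * hE1
    exact mul_left_cancel₀ (ne_of_gt hsθ) key
  · rw [ha'def]
    field_simp
end

section
/- Let λ > 0, let θ_λ ∈ (0, π/2) satisfy tan θ_λ = 1/λ, let β ∈ (0, π/2) and γ_λ ∈ (0, θ_λ), and set m := min{θ_λ, β + γ_λ}. Let μ_L : [γ_λ − β, γ_λ + β] → ℝ be continuous with μ_L(γ_λ) = 0 (symmetric profile) and μ_L > 0 on (γ_λ, γ_λ + β]. If μ_G(m) ≤ μ_L(m), then there exists φ ∈ [γ_λ, m] with μ_L(φ) = μ_G(φ), and at this φ one has μ_G(φ) ≥ 0 (positive lift). Moreover, if θ_λ ≤ β + γ_λ (so m = θ_λ), then the condition μ_G(m) ≤ μ_L(m) is automatically satisfied, so such a solution always exists. -/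
open Real Set

/-- Existence of a solution of `μ_L(φ) = μ_G(φ)` for a symmetric profile,
where `μ_G(φ) = sin φ · tan (θ_λ − φ)` and `m = min {θ_λ, β + γ_λ}`; moreover the
condition `μ_G(m) ≤ μ_L(m)` is automatic when `θ_λ ≤ β + γ_λ`. -/
theorem bem_simplified_existence_symmetric
    (lam θ β γ : ℝ) (hlam : 0 < lam) (hθ : θ ∈ Ioo 0 (π / 2))
    (htan : Real.tan θ = 1 / lam)
    (hβ : β ∈ Ioo 0 (π / 2)) (hγ : γ ∈ Ioo 0 θ)
    (μL : ℝ → ℝ)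
    (hcont : ContinuousOn μL (Icc (γ - β) (γ + β)))
    (hsym : μL γ = 0)
    (hpos : ∀ φ ∈ Ioc γ (γ + β), 0 < μL φ) :
    (Real.sin (min θ (β + γ)) * Real.tan (θ - min θ (β + γ)) ≤ μL (min θ (β + γ)) →
      ∃ φ ∈ Icc γ (min θ (β + γ)),
        μL φ = Real.sin φ * Real.tan (θ - φ) ∧ 0 ≤ Real.sin φ * Real.tan (θ - φ)) ∧
    (θ ≤ β + γ →
      Real.sin (min θ (β + γ)) * Real.tan (θ - min θ (β + γ)) ≤ μL (min θ (β + γ))) := by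

  have hθ0 := hθ.1
  have hθ2 := hθ.2
  set m := min θ (β + γ) with hm
  have hγm : γ < m := lt_min hγ.2 (by linarith [hβ.1])
  have hmθ : m ≤ θ := min_le_left _ _
  have hmβγ : m ≤ β + γ := min_le_right _ _
  have hpi := Real.pi_pos
  have hg : ContinuousOn (fun φ => Real.sin φ * Real.tan (θ - φ)) (Icc γ m) := by
    intro φ hφ
    apply ContinuousAt.continuousWithinAt
    have hcos : Real.cos (θ - φ) ≠ 0 := by
      apply ne_of_gt
      apply Real.cos_pos_of_mem_Ioo
      constructor
      · linarith [hφ.2, hmθ]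
      · linarith [hφ.1, hγ.1]
    exact Real.continuous_sin.continuousAt.mul
      ((Real.continuousAt_tan.2 hcos).comp (continuousAt_const.sub continuousAt_id))
  have hsub : Icc γ m ⊆ Icc (γ - β) (γ + β) := Icc_subset_Icc (by linarith [hβ.1]) (by linarith)
  have hμLc : ContinuousOn μL (Icc γ m) := hcont.mono hsub
  constructor
  · intro hle
    have hf : ContinuousOn (fun φ => μL φ - Real.sin φ * Real.tan (θ - φ)) (Icc γ m) :=
      hμLc.sub hg
    have h1 : 0 < Real.sin γ := Real.sin_pos_of_pos_of_lt_pi hγ.1 (by linarith)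
    have h2 : 0 < Real.tan (θ - γ) :=
      Real.tan_pos_of_pos_of_lt_pi_div_two (by linarith [hγ.2]) (by linarith [hγ.1])
    have h0 : (0:ℝ) ∈ Icc (μL γ - Real.sin γ * Real.tan (θ - γ))
        (μL m - Real.sin m * Real.tan (θ - m)) := by
      constructor
      · rw [hsym]; nlinarith
      · linarith
    obtain ⟨φ, hφ, hφ0⟩ := intermediate_value_Icc hγm.le hf h0
    have hφ0' : μL φ - Real.sin φ * Real.tan (θ - φ) = 0 := hφ0
    refine ⟨φ, hφ, by linarith, ?_⟩
    have hs : 0 ≤ Real.sin φ :=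
      (Real.sin_pos_of_pos_of_lt_pi (by linarith [hφ.1, hγ.1]) (by linarith [hφ.2])).le
    have ht : 0 ≤ Real.tan (θ - φ) :=
      Real.tan_nonneg_of_nonneg_of_le_pi_div_two (by linarith [hφ.2]) (by linarith [hφ.1, hγ.1])
    positivity
  · intro hθle
    have : m = θ := min_eq_left hθle
    rw [this, sub_self, Real.tan_zero, mul_zero]
    exact (hpos θ ⟨hγ.2, by linarith⟩).le
end

section
/- Let λ > 0 with θ_λ ∈ (0, π/2) defined by tan θ_λ = 1/λ, let m ∈ (0, θ_λ], let μ_D : (0, m] → [0, ∞) be continuous, and let (ψ, a_c) be a correction pair. Then for every φ ∈ (0, m] there exists a unique a ∈ [0, 1) satisfying the implicit equation E(φ, a), and the resulting map τ : (0, m] → [0, 1), τ(φ) := this unique a, is continuous. -/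
open Real Set

/-- The function `g(φ) = cot φ · tan(θ − φ) + (μ_D(φ)/sin φ)(1 + cot φ · tan(θ − φ))`. -/
noncomputable def gBEM (θ : ℝ) (μD : ℝ → ℝ) (φ : ℝ) : ℝ :=
  (Real.cos φ / Real.sin φ) * Real.tan (θ - φ) +
    (μD φ / Real.sin φ) * (1 + (Real.cos φ / Real.sin φ) * Real.tan (θ - φ))

/-- The implicit equation `E(φ, a)`:
`a/(1−a) + (sin θ · sin φ / cos(θ−φ)) · ψ((a−a_c)_+)/(1−a)² = g(φ)`. -/
def EBEM (θ : ℝ) (μD ψ : ℝ → ℝ) (ac φ a : ℝ) : Prop :=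
  a / (1 - a) +
      (Real.sin θ * Real.sin φ / Real.cos (θ - φ)) * ψ (max (a - ac) 0) / (1 - a) ^ 2
    = gBEM θ μD φ

/-!
For fixed `φ` the left-hand side of `E(φ, a)` is `a/(1-a)` plus a nonnegative term that is
nondecreasing in `a`, so it increases strictly from `0` at `a = 0` and exceeds any `g ≥ 0`
at `a = g/(1+g)`; the intermediate value theorem and strict monotonicity give exactly one
root. Continuity of the root follows from strict monotonicity in `a` together with
continuity in `φ` at each fixed `a`: writing `F(φ, a)` for the left-hand side, if
`b < τ(φ₀)` then `F(φ₀, b) < g(φ₀)`, this strict inequality persists near `φ₀`, and it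
forces `b < τ(φ)` there.
-/

open Filter Topology

section ImplicitRoot

variable {X α β : Type*} [TopologicalSpace X] [LinearOrder α] [TopologicalSpace α]
  [OrderClosedTopology α] [LinearOrder β] {s : Set X} {I : Set β} {F : X → β → α}
  {g : X → α} {τ : X → β}

theorem eventually_lt_of_strictMonoOn_apply_eq (hI : I.OrdConnected)
    (hF : ∀ x ∈ s, StrictMonoOn (F x) I) (hFc : ∀ b ∈ I, ContinuousOn (fun x => F x b) s)
    (hg : ContinuousOn g s) (hτ : ∀ x ∈ s, τ x ∈ I) (hτeq : ∀ x ∈ s, F x (τ x) = g x)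
    {x₀ : X} (hx₀ : x₀ ∈ s) {b : β} (hb : b < τ x₀) :
    ∀ᶠ x in 𝓝[s] x₀, b < τ x := by
  by_cases hbI : b ∈ I
  · have hlt : F x₀ b < g x₀ := hτeq x₀ hx₀ ▸ hF x₀ hx₀ hbI (hτ x₀ hx₀) hb
    filter_upwards [(hFc b hbI x₀ hx₀).eventually_lt (hg x₀ hx₀) hlt, self_mem_nhdsWithin]
      with x hFx hx
    exact ((hF x hx).lt_iff_lt hbI (hτ x hx)).mp (hτeq x hx ▸ hFx)
  · filter_upwards [self_mem_nhdsWithin] with x hx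
    by_contra! hτb
    exact hbI (hI.out (hτ x hx) (hτ x₀ hx₀) ⟨hτb, hb.le⟩)

theorem continuousOn_of_strictMonoOn_apply_eq [TopologicalSpace β] [OrderTopology β]
    (hI : I.OrdConnected) (hF : ∀ x ∈ s, StrictMonoOn (F x) I)
    (hFc : ∀ b ∈ I, ContinuousOn (fun x => F x b) s) (hg : ContinuousOn g s)
    (hτ : ∀ x ∈ s, τ x ∈ I) (hτeq : ∀ x ∈ s, F x (τ x) = g x) :
    ContinuousOn τ s := fun _ hx₀ =>
  tendsto_order.2
    ⟨fun _ hb => eventually_lt_of_strictMonoOn_apply_eq hI hF hFc hg hτ hτeq hx₀ hb,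
      fun _ hb => eventually_lt_of_strictMonoOn_apply_eq (α := αᵒᵈ) (β := βᵒᵈ) hI.dual
        (fun x hx => (hF x hx).dual) hFc hg hτ hτeq hx₀ hb⟩

end ImplicitRoot

theorem exists_mem_Ico_apply_eq_of_div_one_sub_le {f : ℝ → ℝ} {y : ℝ}
    (hf : ContinuousOn f (Ico 0 1)) (hf_ge : ∀ a ∈ Ico (0 : ℝ) 1, a / (1 - a) ≤ f a)
    (hy : f 0 ≤ y) : ∃ a ∈ Ico (0 : ℝ) 1, f a = y := by
  have hy0 : 0 ≤ y := by simpa using (hf_ge 0 ⟨le_rfl, one_pos⟩).trans hy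
  obtain ⟨a₀, ha₀def⟩ : ∃ a₀, a₀ = y / (1 + y) := ⟨_, rfl⟩
  have ha₀ : a₀ ∈ Ico (0 : ℝ) 1 :=
    ha₀def ▸ ⟨by positivity, (div_lt_one (by linarith)).2 (by linarith)⟩
  have hya₀ : y ≤ f a₀ := calc
    y = a₀ / (1 - a₀) := by rw [ha₀def]; field_simp; ring
    _ ≤ f a₀ := hf_ge a₀ ha₀
  obtain ⟨a, ha, rfl⟩ := intermediate_value_Icc ha₀.1 (hf.mono (Icc_subset_Ico_right ha₀.2))
    ⟨hy, hya₀⟩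
  exact ⟨a, ⟨ha.1, ha.2.trans_lt ha₀.2⟩, rfl⟩

section BEM

variable {θ φ : ℝ}

noncomputable def bemCoeff (θ φ : ℝ) : ℝ := sin θ * sin φ / cos (θ - φ)

noncomputable def bemLHS (θ : ℝ) (ψ : ℝ → ℝ) (ac φ a : ℝ) : ℝ :=
  a / (1 - a) + bemCoeff θ φ * ψ (max (a - ac) 0) / (1 - a) ^ 2

theorem EBEM_iff {μD ψ : ℝ → ℝ} {ac a : ℝ} :
    EBEM θ μD ψ ac φ a ↔ bemLHS θ ψ ac φ a = gBEM θ μD φ := Iff.rfl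

theorem sin_pos_of_mem_Ioc (hφ : φ ∈ Ioc 0 θ) (hθ : θ < π / 2) : 0 < sin φ :=
  sin_pos_of_pos_of_lt_pi hφ.1 (by linarith [hφ.2, pi_pos])

theorem cos_sub_pos_of_mem_Ioc (hφ : φ ∈ Ioc 0 θ) (hθ : θ < π / 2) : 0 < cos (θ - φ) :=
  cos_pos_of_mem_Ioo ⟨by linarith [hφ.2, pi_pos], by linarith [hφ.1]⟩

theorem bemCoeff_nonneg (hφ : φ ∈ Ioc 0 θ) (hθ : θ < π / 2) : 0 ≤ bemCoeff θ φ := by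
  have := sin_pos_of_mem_Ioc hφ hθ
  have := sin_pos_of_mem_Ioc ⟨hφ.1.trans_le hφ.2, le_rfl⟩ hθ
  have := cos_sub_pos_of_mem_Ioc hφ hθ
  unfold bemCoeff
  positivity

theorem gBEM_nonneg {μD : ℝ → ℝ} (hφ : φ ∈ Ioc 0 θ) (hθ : θ < π / 2) (hμD : 0 ≤ μD φ) :
    0 ≤ gBEM θ μD φ := by
  have hsin := sin_pos_of_mem_Ioc hφ hθ
  have hcos : 0 < cos φ := cos_pos_of_mem_Ioo ⟨by linarith [hφ.1, pi_pos], by linarith [hφ.2]⟩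
  have htan : 0 ≤ tan (θ - φ) :=
    tan_nonneg_of_nonneg_of_le_pi_div_two (by linarith [hφ.2]) (by linarith [hφ.1])
  unfold gBEM
  positivity

theorem continuousOn_gBEM {μD : ℝ → ℝ} {s : Set ℝ} (hμD : ContinuousOn μD s)
    (hsin : ∀ φ ∈ s, sin φ ≠ 0) (hcos : ∀ φ ∈ s, cos (θ - φ) ≠ 0) :
    ContinuousOn (gBEM θ μD) s := by
  have htan : ContinuousOn (fun φ => tan (θ - φ)) s := fun φ hφ =>
    ((continuousAt_tan.2 (hcos φ hφ)).comp (by fun_prop)).continuousWithinAt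
  have hcot : ContinuousOn (fun φ => cos φ / sin φ) s :=
    continuous_cos.continuousOn.div continuous_sin.continuousOn hsin
  unfold gBEM
  exact (hcot.mul htan).add ((hμD.div continuous_sin.continuousOn hsin).mul
    (continuousOn_const.add (hcot.mul htan)))

variable {ψ : ℝ → ℝ} {ac : ℝ}

theorem bemLHS_zero (hac : 0 ≤ ac) (hψ0 : ψ 0 = 0) : bemLHS θ ψ ac φ 0 = 0 := by
  simp [bemLHS, max_eq_right (neg_nonpos.2 hac), hψ0]

theorem div_one_sub_le_bemLHS (hc : 0 ≤ bemCoeff θ φ) (hψ : ∀ x ∈ Ici (0 : ℝ), 0 ≤ ψ x)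
    {a : ℝ} : a / (1 - a) ≤ bemLHS θ ψ ac φ a := by
  have := hψ _ (le_max_right (a - ac) 0)
  unfold bemLHS
  have : 0 ≤ bemCoeff θ φ * ψ (max (a - ac) 0) / (1 - a) ^ 2 := by positivity
  linarith

theorem bemLHS_strictMonoOn (hc : 0 ≤ bemCoeff θ φ) (hψmono : MonotoneOn ψ (Ici 0))
    (hψ : ∀ x ∈ Ici (0 : ℝ), 0 ≤ ψ x) : StrictMonoOn (bemLHS θ ψ ac φ) (Ico 0 1) := by
  rintro a ⟨ha0, ha1⟩ b ⟨hb0, hb1⟩ hab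
  have hfrac : a / (1 - a) < b / (1 - b) := by
    rw [div_lt_div_iff₀ (by linarith) (by linarith)]; nlinarith
  have hψab : ψ (max (a - ac) 0) ≤ ψ (max (b - ac) 0) :=
    hψmono (mem_Ici.2 (le_max_right _ _)) (mem_Ici.2 (le_max_right _ _))
      (max_le_max (by linarith) le_rfl)
  have hcorr : ψ (max (a - ac) 0) / (1 - a) ^ 2 ≤ ψ (max (b - ac) 0) / (1 - b) ^ 2 :=
    div_le_div₀ (hψ _ (mem_Ici.2 (le_max_right _ _))) hψab (by nlinarith) (by nlinarith)
  simp only [bemLHS, mul_div_assoc]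
  linarith [mul_le_mul_of_nonneg_left hcorr hc]

theorem continuousOn_bemLHS (hψc : ContinuousOn ψ (Ici 0)) :
    ContinuousOn (bemLHS θ ψ ac φ) (Iio 1) := by
  have hne : ∀ a ∈ Iio (1 : ℝ), 1 - a ≠ 0 := fun a ha => sub_ne_zero.2 (ne_of_gt ha)
  have hψmax : ContinuousOn (fun a => ψ (max (a - ac) 0)) (Iio 1) :=
    hψc.comp (by fun_prop) fun _ _ => mem_Ici.2 (le_max_right _ _)
  exact (continuousOn_id.div (continuousOn_const.sub continuousOn_id) hne).add
    ((continuousOn_const.mul hψmax).div (by fun_prop) fun a ha => pow_ne_zero 2 (hne a ha))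

theorem continuousOn_bemLHS_apply {s : Set ℝ} (hcos : ∀ φ ∈ s, cos (θ - φ) ≠ 0) {a : ℝ}
    (ha : a ≠ 1) : ContinuousOn (fun φ => bemLHS θ ψ ac φ a) s := by
  have hcoeff : ContinuousOn (bemCoeff θ) s := by
    unfold bemCoeff
    exact ContinuousOn.div (by fun_prop) (by fun_prop) hcos
  exact continuousOn_const.add ((hcoeff.mul continuousOn_const).div continuousOn_const
    fun _ _ => pow_ne_zero 2 (sub_ne_zero.2 ha.symm))

end BEM

theorem bem_tau_exists_unique_continuous_general
    (θ m : ℝ) (hθ : θ ∈ Ioo 0 (π / 2))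
    (hm : m ∈ Ioc 0 θ)
    (μD : ℝ → ℝ) (hμDc : ContinuousOn μD (Ioc 0 m))
    (hμDnn : ∀ φ ∈ Ioc 0 m, 0 ≤ μD φ)
    (ac : ℝ) (hac : ac ∈ Ioo (0 : ℝ) 1)
    (ψ : ℝ → ℝ) (hψc : ContinuousOn ψ (Ici 0)) (hψmono : MonotoneOn ψ (Ici 0))
    (hψ0 : ψ 0 = 0) :
    ∃ τ : ℝ → ℝ, ContinuousOn τ (Ioc 0 m) ∧
      ∀ φ ∈ Ioc 0 m, τ φ ∈ Ico (0 : ℝ) 1 ∧ EBEM θ μD ψ ac φ (τ φ) ∧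
        ∀ a ∈ Ico (0 : ℝ) 1, EBEM θ μD ψ ac φ a → a = τ φ := by
  have hsub : Ioc 0 m ⊆ Ioc 0 θ := Ioc_subset_Ioc_right hm.2
  have hψnn : ∀ x ∈ Ici (0 : ℝ), 0 ≤ ψ x := fun x hx => hψ0 ▸ hψmono self_mem_Ici hx hx
  have hc : ∀ φ ∈ Ioc 0 m, 0 ≤ bemCoeff θ φ := fun φ hφ => bemCoeff_nonneg (hsub hφ) hθ.2
  have hmono : ∀ φ ∈ Ioc 0 m, StrictMonoOn (bemLHS θ ψ ac φ) (Ico 0 1) :=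
    fun φ hφ => bemLHS_strictMonoOn (hc φ hφ) hψmono hψnn
  have hroot : ∀ φ ∈ Ioc 0 m, ∃ a ∈ Ico (0 : ℝ) 1, bemLHS θ ψ ac φ a = gBEM θ μD φ :=
    fun φ hφ => exists_mem_Ico_apply_eq_of_div_one_sub_le
      ((continuousOn_bemLHS hψc).mono fun _ ha => ha.2)
      (fun _ _ => div_one_sub_le_bemLHS (hc φ hφ) hψnn)
      ((bemLHS_zero hac.1.le hψ0).trans_le (gBEM_nonneg (hsub hφ) hθ.2 (hμDnn φ hφ)))
  choose! τ hτ hτeq using hroot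
  have hcos : ∀ φ ∈ Ioc 0 m, cos (θ - φ) ≠ 0 :=
    fun φ hφ => (cos_sub_pos_of_mem_Ioc (hsub hφ) hθ.2).ne'
  have hcont : ContinuousOn τ (Ioc 0 m) :=
    continuousOn_of_strictMonoOn_apply_eq ordConnected_Ico hmono
      (fun _ hb => continuousOn_bemLHS_apply hcos hb.2.ne)
      (continuousOn_gBEM hμDc (fun φ hφ => (sin_pos_of_mem_Ioc (hsub hφ) hθ.2).ne') hcos)
      hτ hτeq
  exact ⟨τ, hcont, fun φ hφ => ⟨hτ φ hφ, EBEM_iff.2 (hτeq φ hφ), fun a ha hE =>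
    (hmono φ hφ).injOn ha (hτ φ hφ) ((EBEM_iff.1 hE).trans (hτeq φ hφ).symm)⟩⟩

/-- For every `φ ∈ (0, m]` the implicit equation `E(φ, a)` has a unique
solution `a ∈ [0, 1)`, and the resulting map `τ` is continuous on `(0, m]`. -/
theorem bem_tau_exists_unique_continuous
    (lam θ m : ℝ) (hlam : 0 < lam) (hθ : θ ∈ Ioo 0 (π / 2))
    (htan : Real.tan θ = 1 / lam) (hm : m ∈ Ioc 0 θ)
    (μD : ℝ → ℝ) (hμDc : ContinuousOn μD (Ioc 0 m))
    (hμDnn : ∀ φ ∈ Ioc 0 m, 0 ≤ μD φ)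
    (ac : ℝ) (hac : ac ∈ Ioo (0 : ℝ) 1)
    (ψ : ℝ → ℝ) (hψc : ContinuousOn ψ (Ici 0)) (hψmono : MonotoneOn ψ (Ici 0))
    (hψ0 : ψ 0 = 0) (hψnn : ∀ x ∈ Ici (0 : ℝ), 0 ≤ ψ x) :
    ∃ τ : ℝ → ℝ, ContinuousOn τ (Ioc 0 m) ∧
      ∀ φ ∈ Ioc 0 m, τ φ ∈ Ico (0 : ℝ) 1 ∧ EBEM θ μD ψ ac φ (τ φ) ∧
        ∀ a ∈ Ico (0 : ℝ) 1, EBEM θ μD ψ ac φ a → a = τ φ :=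
  bem_tau_exists_unique_continuous_general θ m hθ hm μD hμDc hμDnn ac hac ψ hψc hψmono hψ0
end

section
/- Let λ > 0 with θ_λ ∈ (0, π/2) defined by tan θ_λ = 1/λ, let m ∈ (0, θ_λ], let μ_L, μ_D : (0, m] → ℝ be functions, and let (ψ, a_c) be a correction pair (with ψ extended to ℝ by ψ((x)_+)). Suppose φ ∈ (0, m], a ∈ ℝ with a ≠ 1, and a' ∈ ℝ satisfy the corrected BEM system. Then (A) a/(1 − a) + (sin θ_λ · sin φ / cos(θ_λ − φ)) · ψ((a − a_c)_+)/(1 − a)² = g(φ), and (B) μ_L(φ) − tan(θ_λ − φ) μ_D(φ) = μ_G(φ) + (cos θ_λ · sin² φ / cos(θ_λ − φ)) · ψ((a − a_c)_+)/(1 − a)². -/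
open Real Set

/-!
Write `N = μ_L cos φ + μ_D sin φ` and `T = μ_L sin φ − μ_D cos φ` for the numerators in (ii) and
(iii). Rotating back by `θ − φ` gives `μ_L cos(θ−φ) − μ_D sin(θ−φ) = N cos θ + T sin θ`, and
`λ sin θ = cos θ` makes this `sin² φ cos θ · ((a + a')/(1 − a) + Ψ)`, with `Ψ = ψ((a−a_c)_+)/(1−a)²`.
By (i), `sin φ cos θ · (a + a')/(1 − a) = sin(θ − φ)`, which is (B) multiplied by `cos(θ − φ)`.
Identity (A) then follows from (ii) and (B) using only `sin θ = sin φ cos(θ−φ) + cos φ sin(θ−φ)`.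
-/

lemma lam_mul_sin_eq_cos {lam θ : ℝ} (hlam : lam ≠ 0) (hcos : cos θ ≠ 0)
    (htan : tan θ = 1 / lam) : lam * sin θ = cos θ := by
  rw [tan_eq_sin_div_cos, div_eq_div_iff hcos hlam] at htan
  linarith

lemma mul_cos_sub_sub_mul_sin_sub (L D θ φ : ℝ) :
    L * cos (θ - φ) - D * sin (θ - φ)
      = (L * cos φ + D * sin φ) * cos θ + (L * sin φ - D * cos φ) * sin θ := by
  rw [cos_sub, sin_sub]; ring

lemma sin_eq_sin_mul_cos_sub_add_cos_mul_sin_sub (θ φ : ℝ) :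
    sin θ = sin φ * cos (θ - φ) + cos φ * sin (θ - φ) := by
  rw [← sin_add, add_sub_cancel]

lemma gBEM_eq_div {θ φ : ℝ} (μD : ℝ → ℝ) (hs : sin φ ≠ 0) (hc : cos (θ - φ) ≠ 0) :
    gBEM θ μD φ
      = (sin φ * cos φ * sin (θ - φ) + μD φ * sin θ) / (sin φ ^ 2 * cos (θ - φ)) := by
  rw [gBEM, tan_eq_sin_div_cos, sin_eq_sin_mul_cos_sub_add_cos_mul_sin_sub θ φ]
  field_simp

section Balance

variable {lam θ φ a a' L D p : ℝ}

lemma bem_rotated_balance (hs : sin φ ≠ 0) (hc : cos φ ≠ 0) (ha : 1 - a ≠ 0)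
    (hlsc : lam * sin θ = cos θ)
    (h1 : tan φ = (1 - a) / (lam * (1 + a')))
    (h2 : a / (1 - a) = (L * cos φ + D * sin φ) / sin φ ^ 2 - p / (1 - a) ^ 2)
    (h3 : a' / (1 - a) = (L * sin φ - D * cos φ) / (lam * sin φ ^ 2)) :
    L * cos (θ - φ) - D * sin (θ - φ)
      = sin φ * sin (θ - φ) + cos θ * sin φ ^ 2 * p / (1 - a) ^ 2 := by
  have hlam : lam ≠ 0 := by
    rintro rfl
    simp [tan_eq_sin_div_cos, hs, hc] at h1
  have hN : L * cos φ + D * sin φ = sin φ ^ 2 * (a / (1 - a) + p / (1 - a) ^ 2) := by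
    rw [h2]; field_simp; ring
  have hT : (L * sin φ - D * cos φ) * sin θ = sin φ ^ 2 * cos θ * (a' / (1 - a)) := by
    rw [h3, ← hlsc]; field_simp
  have hturn : sin φ * cos θ * ((a + a') / (1 - a)) = sin (θ - φ) := by
    have ha' : 1 + a' = (1 - a) * cos φ / (lam * sin φ) := by
      have h1a' : 1 + a' ≠ 0 := by
        rintro h
        simp [h, tan_eq_sin_div_cos, hs, hc] at h1
      rw [tan_eq_sin_div_cos, div_eq_div_iff hc (mul_ne_zero hlam h1a')] at h1
      field_simp
      linear_combination h1
    rw [sin_sub, ← hlsc, show a + a' = (1 + a') - (1 - a) by ring, ha']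
    field_simp
  rw [mul_cos_sub_sub_mul_sin_sub, hN, hT, ← hturn]
  ring

lemma bem_implicit_of_rotated_balance (hs : sin φ ≠ 0) (hc : cos (θ - φ) ≠ 0) (ha : 1 - a ≠ 0)
    (h2 : a / (1 - a) = (L * cos φ + D * sin φ) / sin φ ^ 2 - p / (1 - a) ^ 2)
    (hbal : L * cos (θ - φ) - D * sin (θ - φ)
      = sin φ * sin (θ - φ) + cos θ * sin φ ^ 2 * p / (1 - a) ^ 2) :
    a / (1 - a) + (sin θ * sin φ / cos (θ - φ)) * p / (1 - a) ^ 2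
      = (sin φ * cos φ * sin (θ - φ) + D * sin θ) / (sin φ ^ 2 * cos (θ - φ)) := by
  have hsin := sin_eq_sin_mul_cos_sub_add_cos_mul_sin_sub θ φ
  have hcos := cos_sub θ φ
  rw [h2]
  field_simp
  field_simp at hbal
  linear_combination cos φ * hbal - sin φ ^ 2 * p * hcos - (1 - a) ^ 2 * D * hsin

end Balance

theorem bem_corrected_necessity_general
    (lam θ m : ℝ) (hlam : 0 < lam) (hθ : θ ∈ Ioo 0 (π / 2))
    (htan : Real.tan θ = 1 / lam) (hm : m ∈ Ioc 0 θ)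
    (μL μD : ℝ → ℝ)
    (ac : ℝ)
    (ψ : ℝ → ℝ)
    (φ a a' : ℝ) (hφ : φ ∈ Ioc 0 m) (ha : a ≠ 1)
    (h1 : Real.tan φ = (1 - a) / (lam * (1 + a')))
    (h2 : a / (1 - a)
        = (μL φ * Real.cos φ + μD φ * Real.sin φ) / Real.sin φ ^ 2
          - ψ (max (a - ac) 0) / (1 - a) ^ 2)
    (h3 : a' / (1 - a)
        = (μL φ * Real.sin φ - μD φ * Real.cos φ) / (lam * Real.sin φ ^ 2)) :
    EBEM θ μD ψ ac φ a ∧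
    μL φ - Real.tan (θ - φ) * μD φ
      = Real.sin φ * Real.tan (θ - φ) +
        (Real.cos θ * Real.sin φ ^ 2 / Real.cos (θ - φ)) * ψ (max (a - ac) 0) / (1 - a) ^ 2 := by
  obtain ⟨hθ0, hθ2⟩ := hθ
  have hφ0 : 0 < φ := hφ.1
  have hπ := pi_pos
  have hφθ : φ ≤ θ := hφ.2.trans hm.2
  have hs : sin φ ≠ 0 := (sin_pos_of_pos_of_lt_pi hφ0 (by linarith)).ne'
  have hc : cos φ ≠ 0 := (cos_pos_of_mem_Ioo ⟨by linarith, by linarith⟩).ne'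
  have hcd : cos (θ - φ) ≠ 0 := (cos_pos_of_mem_Ioo ⟨by linarith, by linarith⟩).ne'
  have hcθ : cos θ ≠ 0 := (cos_pos_of_mem_Ioo ⟨by linarith, hθ2⟩).ne'
  have hu : 1 - a ≠ 0 := sub_ne_zero.mpr (Ne.symm ha)
  have hbal := bem_rotated_balance hs hc hu (lam_mul_sin_eq_cos hlam.ne' hcθ htan) h1 h2 h3
  refine ⟨?_, ?_⟩
  · rw [EBEM, gBEM_eq_div μD hs hcd]
    exact bem_implicit_of_rotated_balance hs hcd hu h2 hbal
  · calc μL φ - tan (θ - φ) * μD φ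
          = (μL φ * cos (θ - φ) - μD φ * sin (θ - φ)) / cos (θ - φ) := by
            rw [tan_eq_sin_div_cos]; field_simp
      _ = _ := by rw [hbal, tan_eq_sin_div_cos]; ring

/-- If `(φ, a, a')` solves the corrected BEM system, then
(A) `a` solves the implicit equation `E(φ, a)`, and
(B) `μ_L(φ) − tan(θ−φ)·μ_D(φ) = μ_G(φ) + (cos θ · sin²φ / cos(θ−φ)) · ψ((a−a_c)_+)/(1−a)²`. -/
theorem bem_corrected_necessity
    (lam θ m : ℝ) (hlam : 0 < lam) (hθ : θ ∈ Ioo 0 (π / 2))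
    (htan : Real.tan θ = 1 / lam) (hm : m ∈ Ioc 0 θ)
    (μL μD : ℝ → ℝ)
    (ac : ℝ) (hac : ac ∈ Ioo (0 : ℝ) 1)
    (ψ : ℝ → ℝ) (hψc : ContinuousOn ψ (Ici 0)) (hψmono : MonotoneOn ψ (Ici 0))
    (hψ0 : ψ 0 = 0) (hψnn : ∀ x ∈ Ici (0 : ℝ), 0 ≤ ψ x)
    (φ a a' : ℝ) (hφ : φ ∈ Ioc 0 m) (ha : a ≠ 1)
    (h1 : Real.tan φ = (1 - a) / (lam * (1 + a')))
    (h2 : a / (1 - a)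
        = (μL φ * Real.cos φ + μD φ * Real.sin φ) / Real.sin φ ^ 2
          - ψ (max (a - ac) 0) / (1 - a) ^ 2)
    (h3 : a' / (1 - a)
        = (μL φ * Real.sin φ - μD φ * Real.cos φ) / (lam * Real.sin φ ^ 2)) :
    EBEM θ μD ψ ac φ a ∧
    μL φ - Real.tan (θ - φ) * μD φ
      = Real.sin φ * Real.tan (θ - φ) +
        (Real.cos θ * Real.sin φ ^ 2 / Real.cos (θ - φ)) * ψ (max (a - ac) 0) / (1 - a) ^ 2 :=
  bem_corrected_necessity_general lam θ m hlam hθ htan hm μL μD ac ψ φ a a' hφ ha h1 h2 h3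
end

section
/- Let λ > 0 with θ_λ ∈ (0, π/2) defined by tan θ_λ = 1/λ, let m ∈ (0, θ_λ], let μ_L, μ_D : (0, m] → ℝ be functions, and let (ψ, a_c) be a correction pair. Suppose φ ∈ (0, m] and a ∈ [0, 1) satisfy both (A) a/(1 − a) + (sin θ_λ · sin φ / cos(θ_λ − φ)) · ψ((a − a_c)_+)/(1 − a)² = g(φ) and (B) μ_L(φ) − tan(θ_λ − φ) μ_D(φ) = μ_G(φ) + (cos θ_λ · sin² φ / cos(θ_λ − φ)) · ψ((a − a_c)_+)/(1 − a)², and define a' := (1 − a)(μ_L(φ) sin φ − μ_D(φ) cos φ)/(λ sin² φ). Then (φ, a, a') satisfies all three equations of the corrected BEM system (in particular a' ≠ −1). -/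
open Real Set

/-! Writing `θ = (θ - φ) + φ` turns every trigonometric function of `θ` divided by
`cos (θ - φ)` into a polynomial in `sin φ`, `cos φ` and `T = tan (θ - φ)`. In these variables
(A) and (B) give the axial equation (ii) by eliminating `μ_L`, and (B) together with (ii),
the definition of `a'` and `λ sin θ = cos θ` gives `λ (1 + a') sin φ = (1 - a) cos φ`, which is
the flow-angle equation (i) and forces `a' ≠ -1`. -/

lemma cos_div_cos_sub {θ φ : ℝ} (h : cos (θ - φ) ≠ 0) :
    cos θ / cos (θ - φ) = cos φ - tan (θ - φ) * sin φ := by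
  rw [show cos θ = cos ((θ - φ) + φ) by ring_nf, cos_add, tan_eq_sin_div_cos]
  field_simp

lemma sin_div_cos_sub {θ φ : ℝ} (h : cos (θ - φ) ≠ 0) :
    sin θ / cos (θ - φ) = tan (θ - φ) * cos φ + sin φ := by
  rw [show sin θ = sin ((θ - φ) + φ) by ring_nf, sin_add, tan_eq_sin_div_cos]
  field_simp

section Algebra

variable {s c T μL μD q : ℝ}

lemma axial_eq_of_corrected {u : ℝ} (hs : s ≠ 0) (hsc : s ^ 2 + c ^ 2 = 1)
    (hA : u + (T * c + s) * s * q = c / s * T + μD / s * (1 + c / s * T))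
    (hB : μL - T * μD = s * T + (c - T * s) * s ^ 2 * q) :
    u = (μL * c + μD * s) / s ^ 2 - q := by
  field_simp at hA ⊢
  linear_combination hA - c * hB - s ^ 2 * q * hsc

lemma flow_angle_eq_of_corrected {a a' lam : ℝ} (hs : s ≠ 0) (hsc : s ^ 2 + c ^ 2 = 1)
    (hlam : lam ≠ 0) (ha : 1 - a ≠ 0) (hTcs : T * c + s ≠ 0)
    (hcot : lam * (T * c + s) = c - T * s)
    (hii : a / (1 - a) = (μL * c + μD * s) / s ^ 2 - q)
    (hB : μL - T * μD = s * T + (c - T * s) * s ^ 2 * q)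
    (ha' : a' = (1 - a) * (μL * s - μD * c) / (lam * s ^ 2)) :
    lam * (1 + a') * s = (1 - a) * c := by
  field_simp at hii ha'
  refine mul_left_cancel₀ (mul_ne_zero hs hTcs) ?_
  linear_combination s ^ 2 * hcot + (T * c + s) * ha' + (c - T * s) * hii + (1 - a) * hB +
    (1 - a) * (μL - T * μD - T * s) * hsc

end Algebra

theorem bem_corrected_sufficiency_general
    (lam θ m : ℝ) (hlam : 0 < lam) (hθ : θ ∈ Ioo 0 (π / 2))
    (htan : Real.tan θ = 1 / lam) (hm : m ∈ Ioc 0 θ)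
    (μL μD : ℝ → ℝ)
    (ac : ℝ)
    (ψ : ℝ → ℝ)
    (φ a a' : ℝ) (hφ : φ ∈ Ioc 0 m) (ha : a ∈ Ico (0 : ℝ) 1)
    (hA : EBEM θ μD ψ ac φ a)
    (hB : μL φ - Real.tan (θ - φ) * μD φ
        = Real.sin φ * Real.tan (θ - φ) +
          (Real.cos θ * Real.sin φ ^ 2 / Real.cos (θ - φ)) * ψ (max (a - ac) 0) / (1 - a) ^ 2)
    (ha'def : a' = (1 - a) * (μL φ * Real.sin φ - μD φ * Real.cos φ) / (lam * Real.sin φ ^ 2)) :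
    a' ≠ -1 ∧
    Real.tan φ = (1 - a) / (lam * (1 + a')) ∧
    a / (1 - a)
      = (μL φ * Real.cos φ + μD φ * Real.sin φ) / Real.sin φ ^ 2
        - ψ (max (a - ac) 0) / (1 - a) ^ 2 ∧
    a' / (1 - a)
      = (μL φ * Real.sin φ - μD φ * Real.cos φ) / (lam * Real.sin φ ^ 2) := by
  obtain ⟨hθ0, hθπ⟩ := hθ
  obtain ⟨hφ0, hφm⟩ := hφ
  have hφθ : φ ≤ θ := hφm.trans hm.2
  have hs : 0 < sin φ := sin_pos_of_pos_of_lt_pi hφ0 (by linarith [pi_pos])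
  have hc : 0 < cos φ := cos_pos_of_mem_Ioo ⟨by linarith [pi_pos], by linarith⟩
  have hD : 0 < cos (θ - φ) := cos_pos_of_mem_Ioo ⟨by linarith [pi_pos], by linarith⟩
  have hcθ : cos θ ≠ 0 := (cos_pos_of_mem_Ioo ⟨by linarith [pi_pos], hθπ⟩).ne'
  have h1a : 0 < 1 - a := sub_pos.2 ha.2
  have hcot : lam * sin θ = cos θ := by
    rw [tan_eq_sin_div_cos, div_eq_div_iff hcθ hlam.ne'] at htan
    linarith
  have hTcs : tan (θ - φ) * cos φ + sin φ ≠ 0 := by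
    rw [← sin_div_cos_sub hD.ne']
    exact (div_pos (sin_pos_of_pos_of_lt_pi hθ0 (by linarith)) hD).ne'
  rw [EBEM, gBEM, mul_div_right_comm (sin θ), sin_div_cos_sub hD.ne', mul_div_assoc] at hA
  rw [mul_div_right_comm (cos θ), cos_div_cos_sub hD.ne', mul_div_assoc] at hB
  have hii := axial_eq_of_corrected hs.ne' (sin_sq_add_cos_sq φ) hA hB
  have hkey := flow_angle_eq_of_corrected hs.ne' (sin_sq_add_cos_sq φ) hlam.ne' h1a.ne' hTcs
    (by rw [← sin_div_cos_sub hD.ne', ← cos_div_cos_sub hD.ne', ← hcot, mul_div_assoc]) hii hB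
    ha'def
  have hden : lam * (1 + a') ≠ 0 :=
    left_ne_zero_of_mul (hkey ▸ (mul_pos h1a hc).ne')
  refine ⟨fun h ↦ by simp [h] at hden, ?_, hii, ?_⟩
  · rw [tan_eq_sin_div_cos, div_eq_div_iff hc.ne' hden]
    linear_combination hkey
  · rw [ha'def, mul_div_assoc, mul_div_cancel_left₀ _ h1a.ne']

/-- Reciprocal for the corrected model: if `φ ∈ (0, m]` and `a ∈ [0, 1)`
satisfy (A) the implicit equation `E(φ, a)` and (B) the corrected scalar equation, and `a'`
is defined from equation (iii), then `(φ, a, a')` solves the whole corrected BEM system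
(in particular `a' ≠ −1`). -/
theorem bem_corrected_sufficiency
    (lam θ m : ℝ) (hlam : 0 < lam) (hθ : θ ∈ Ioo 0 (π / 2))
    (htan : Real.tan θ = 1 / lam) (hm : m ∈ Ioc 0 θ)
    (μL μD : ℝ → ℝ)
    (ac : ℝ) (hac : ac ∈ Ioo (0 : ℝ) 1)
    (ψ : ℝ → ℝ) (hψc : ContinuousOn ψ (Ici 0)) (hψmono : MonotoneOn ψ (Ici 0))
    (hψ0 : ψ 0 = 0) (hψnn : ∀ x ∈ Ici (0 : ℝ), 0 ≤ ψ x)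
    (φ a a' : ℝ) (hφ : φ ∈ Ioc 0 m) (ha : a ∈ Ico (0 : ℝ) 1)
    (hA : EBEM θ μD ψ ac φ a)
    (hB : μL φ - Real.tan (θ - φ) * μD φ
        = Real.sin φ * Real.tan (θ - φ) +
          (Real.cos θ * Real.sin φ ^ 2 / Real.cos (θ - φ)) * ψ (max (a - ac) 0) / (1 - a) ^ 2)
    (ha'def : a' = (1 - a) * (μL φ * Real.sin φ - μD φ * Real.cos φ) / (lam * Real.sin φ ^ 2)) :
    a' ≠ -1 ∧
    Real.tan φ = (1 - a) / (lam * (1 + a')) ∧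
    a / (1 - a)
      = (μL φ * Real.cos φ + μD φ * Real.sin φ) / Real.sin φ ^ 2
        - ψ (max (a - ac) 0) / (1 - a) ^ 2 ∧
    a' / (1 - a)
      = (μL φ * Real.sin φ - μD φ * Real.cos φ) / (lam * Real.sin φ ^ 2) :=
  bem_corrected_sufficiency_general lam θ m hlam hθ htan hm μL μD ac ψ φ a a' hφ ha hA hB ha'def
end

section
/- Let λ > 0 with θ_λ ∈ (0, π/2) defined by tan θ_λ = 1/λ, let m ∈ (0, θ_λ], let μ_D : [0, m] → [0, ∞) be continuous with μ_D(0) > 0, let (ψ, a_c) be a correction pair, and let τ : (0, m] → [0, 1) be the map sending φ to the unique a ∈ [0, 1) satisfying E(φ, a). Then τ(φ) → 1 as φ → 0⁺. -/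
open Real Set

set_option maxHeartbeats 1000000 in
/-- If `μ_D` is continuous on `[0, m]` with `μ_D(0) > 0`, then
`τ(φ) → 1` as `φ → 0⁺`. -/
theorem bem_tau_tendsto_one
    (lam θ m : ℝ) (hlam : 0 < lam) (hθ : θ ∈ Ioo 0 (π / 2))
    (htan : Real.tan θ = 1 / lam) (hm : m ∈ Ioc 0 θ)
    (μD : ℝ → ℝ) (hμDc : ContinuousOn μD (Icc 0 m))
    (hμDnn : ∀ φ ∈ Icc 0 m, 0 ≤ μD φ) (hμD0 : 0 < μD 0)
    (ac : ℝ) (hac : ac ∈ Ioo (0 : ℝ) 1)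
    (ψ : ℝ → ℝ) (hψc : ContinuousOn ψ (Ici 0)) (hψmono : MonotoneOn ψ (Ici 0))
    (hψ0 : ψ 0 = 0) (hψnn : ∀ x ∈ Ici (0 : ℝ), 0 ≤ ψ x)
    (τ : ℝ → ℝ)
    (hτ : ∀ φ ∈ Ioc 0 m, τ φ ∈ Ico (0 : ℝ) 1 ∧ EBEM θ μD ψ ac φ (τ φ))
    (hτuniq : ∀ φ ∈ Ioc 0 m, ∀ a ∈ Ico (0 : ℝ) 1, EBEM θ μD ψ ac φ a → a = τ φ) :
    Filter.Tendsto τ (nhdsWithin 0 (Ioi 0)) (nhds 1) := by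
  obtain ⟨hθ0, hθ2⟩ := hθ
  obtain ⟨hm0, hmθ⟩ := hm
  have hcosθ : 0 < Real.cos θ := Real.cos_pos_of_mem_Ioo ⟨by linarith [Real.pi_pos], hθ2⟩
  have hψ1 : 0 ≤ ψ 1 := hψnn 1 (by norm_num)
  rw [Metric.tendsto_nhdsWithin_nhds]
  intro ε hε
  set ε' : ℝ := min ε 1 / 2 with hε'def
  have hε'pos : 0 < ε' := by
    have := lt_min hε one_pos
    simp only [hε'def]; linarith
  have hε'lt1 : ε' < 1 := by
    have := min_le_right ε 1
    simp only [hε'def]; linarith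
  have hε'le : ε' ≤ ε := by
    have := min_le_left ε 1
    simp only [hε'def]; linarith
  set C : ℝ := 1 / ε' + (ψ 1 / Real.cos θ) / ε' ^ 2 with hCdef
  have hCpos : 0 < C + 1 := by positivity
  -- continuity: μD φ > μD 0 / 2 near 0
  have hcont : ContinuousWithinAt μD (Icc 0 m) 0 := hμDc 0 ⟨le_refl 0, hm0.le⟩
  have hev : μD ⁻¹' Ioi (μD 0 / 2) ∈ nhdsWithin 0 (Icc 0 m) :=
    hcont (Ioi_mem_nhds (by linarith))
  obtain ⟨δ₁, hδ₁pos, hδ₁⟩ := Metric.mem_nhdsWithin_iff.mp hev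
  refine ⟨min δ₁ (min m (μD 0 / (2 * (C + 1)))), by positivity, ?_⟩
  intro φ hφ hdist
  have hφ0 : 0 < φ := hφ
  have hφδ : φ < min δ₁ (min m (μD 0 / (2 * (C + 1)))) := by
    rwa [Real.dist_eq, sub_zero, abs_of_pos hφ0] at hdist
  have hφδ₁ : φ < δ₁ := lt_of_lt_of_le hφδ (min_le_left _ _)
  have hφm : φ ≤ m := le_of_lt (lt_of_lt_of_le hφδ ((min_le_right _ _).trans (min_le_left _ _)))
  have hφsmall : φ < μD 0 / (2 * (C + 1)) :=
    lt_of_lt_of_le hφδ ((min_le_right _ _).trans (min_le_right _ _))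
  have hφIoc : φ ∈ Ioc 0 m := ⟨hφ0, hφm⟩
  obtain ⟨⟨ha0, ha1⟩, hE⟩ := hτ φ hφIoc
  set a := τ φ with hadef
  -- it suffices to show a > 1 - ε'
  have key : 1 - ε' < a := by
    by_contra hcon
    push_neg at hcon
    have hφθ : φ ≤ θ := hφm.trans hmθ
    have hsφ : 0 < Real.sin φ :=
      Real.sin_pos_of_pos_of_lt_pi hφ0 (by linarith [Real.pi_pos])
    have hcφ : 0 < Real.cos φ :=
      Real.cos_pos_of_mem_Ioo ⟨by linarith [Real.pi_pos], by linarith⟩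
    have hsθ : 0 < Real.sin θ :=
      Real.sin_pos_of_pos_of_lt_pi hθ0 (by linarith [Real.pi_pos])
    have htannn : 0 ≤ Real.tan (θ - φ) := by
      rw [Real.tan_eq_sin_div_cos]
      apply div_nonneg
      · exact Real.sin_nonneg_of_nonneg_of_le_pi (by linarith) (by linarith [Real.pi_pos])
      · exact Real.cos_nonneg_of_mem_Icc ⟨by linarith [Real.pi_pos], by linarith⟩
    have hcθφ : Real.cos θ ≤ Real.cos (θ - φ) :=
      Real.cos_le_cos_of_nonneg_of_le_pi (by linarith) (by linarith [Real.pi_pos]) (by linarith)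
    have hcθφpos : 0 < Real.cos (θ - φ) := lt_of_lt_of_le hcosθ hcθφ
    have hμφ : μD 0 / 2 < μD φ := by
      have : φ ∈ Metric.ball (0 : ℝ) δ₁ ∩ Icc 0 m := by
        constructor
        · rw [Metric.mem_ball, Real.dist_eq, sub_zero, abs_of_pos hφ0]; exact hφδ₁
        · exact ⟨hφ0.le, hφm⟩
      exact hδ₁ this
    have h1a : ε' ≤ 1 - a := by linarith
    -- upper bound for LHS
    have hterm1 : a / (1 - a) ≤ 1 / ε' :=
      div_le_div₀ zero_le_one ha1.le hε'pos h1a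
    have hP0 : (0 : ℝ) ≤ max (a - ac) 0 := le_max_right _ _
    have hP1 : max (a - ac) 0 ≤ 1 := max_le (by linarith [hac.1]) zero_le_one
    have hψP : ψ (max (a - ac) 0) ≤ ψ 1 :=
      hψmono (mem_Ici.mpr hP0) (mem_Ici.mpr zero_le_one) hP1
    have hψPnn : 0 ≤ ψ (max (a - ac) 0) := hψnn _ (mem_Ici.mpr hP0)
    have hSnn : 0 ≤ Real.sin θ * Real.sin φ / Real.cos (θ - φ) :=
      div_nonneg (by positivity) hcθφpos.le
    have hS : Real.sin θ * Real.sin φ / Real.cos (θ - φ) ≤ 1 / Real.cos θ := by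
      apply div_le_div₀ zero_le_one _ hcosθ hcθφ
      have h1 : Real.sin θ ≤ 1 := Real.sin_le_one θ
      have h2 : Real.sin φ ≤ 1 := Real.sin_le_one φ
      nlinarith [hsθ.le, hsφ.le]
    have hnum : Real.sin θ * Real.sin φ / Real.cos (θ - φ) * ψ (max (a - ac) 0)
        ≤ 1 / Real.cos θ * ψ 1 :=
      mul_le_mul hS hψP hψPnn (by positivity)
    have hsq : ε' ^ 2 ≤ (1 - a) ^ 2 := pow_le_pow_left₀ hε'pos.le h1a 2
    have hterm2 : Real.sin θ * Real.sin φ / Real.cos (θ - φ) * ψ (max (a - ac) 0) / (1 - a) ^ 2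
        ≤ (ψ 1 / Real.cos θ) / ε' ^ 2 := by
      have h2 : (1 : ℝ) / Real.cos θ * ψ 1 = ψ 1 / Real.cos θ := by ring
      rw [← h2]
      exact div_le_div₀ (by positivity) hnum (by positivity) hsq
    -- lower bound for g
    have hgLB : μD φ / Real.sin φ ≤ gBEM θ μD φ := by
      unfold gBEM
      have hct : 0 ≤ Real.cos φ / Real.sin φ * Real.tan (θ - φ) := by positivity
      have hμnn : 0 ≤ μD φ / Real.sin φ :=
        div_nonneg (hμDnn φ ⟨hφ0.le, hφm⟩) hsφ.le
      have hx := mul_nonneg hμnn hct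
      have hring : μD φ / Real.sin φ * (1 + Real.cos φ / Real.sin φ * Real.tan (θ - φ))
          = μD φ / Real.sin φ + μD φ / Real.sin φ * (Real.cos φ / Real.sin φ * Real.tan (θ - φ)) := by
        ring
      rw [hring]
      linarith
    have hsinle : Real.sin φ ≤ φ := Real.sin_le hφ0.le
    have hgbig : C + 1 ≤ μD φ / Real.sin φ := by
      have h1 : μD 0 / 2 / φ ≤ μD φ / Real.sin φ :=
        div_le_div₀ (hμDnn φ ⟨hφ0.le, hφm⟩) hμφ.le hsφ hsinle
      have h2 : C + 1 ≤ μD 0 / 2 / φ := by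
        rw [le_div_iff₀ hφ0]
        have h3 := mul_lt_mul_of_pos_left hφsmall hCpos
        have heq : (C + 1) * (μD 0 / (2 * (C + 1))) = μD 0 / 2 := by
          field_simp
        linarith
      linarith
    -- contradiction
    unfold EBEM at hE
    linarith [hE, hterm1, hterm2, hgLB, hgbig]
  have : dist a 1 < ε := by
    rw [Real.dist_eq, abs_lt]
    constructor <;> linarith
  exact this
end

section
/- Let λ > 0 with θ_λ ∈ (0, π/2) defined by tan θ_λ = 1/λ, let m ∈ (0, θ_λ], let μ_D : [0, m] → [0, ∞) be continuous with μ_D(0) > 0, let (ψ, a_c) be a correction pair, and let τ : (0, m] → [0, 1) be the map sending φ to the unique a ∈ [0, 1) satisfying E(φ, a). Then (1 − τ(φ))/φ^{3/2} → √(ψ(1 − a_c)/μ_D(0)) as φ → 0⁺; equivalently, τ(φ) = 1 − √(ψ(1 − a_c)/μ_D(0)) · φ^{3/2} + o(φ^{3/2}) as φ → 0⁺. -/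
/-!
Write `F(φ, a)` for the left-hand side of `E(φ, a)`. It is non-decreasing in `a < 1`, so `τ(φ)`
lies above every trial point `a` with `F(φ, a) < g(φ)` and below every one with
`F(φ, a) > g(φ)`. At the trial points `a = 1 - c φ^{3/2}` one has
`φ² F(φ, a) → tan θ · ψ(1 - a_c) / c²`, while `φ² g(φ) → μ_D(0) tan θ` because `sin φ ~ φ`.
These limits cross exactly at `c = √(ψ(1 - a_c) / μ_D(0))`, which traps
`(1 - τ(φ)) / φ^{3/2}` between any `c` below and any `c` above this value.
-/

open Real Set

open Filter Topology

section RootAsymptotics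

variable {α : Type*} {l : Filter α} {F : α → ℝ → ℝ} {g τ r w : α → ℝ}

theorem eventually_one_sub_root_div_lt (hmono : ∀ᶠ x in l, MonotoneOn (F x) (Iio 1))
    (hroot : ∀ᶠ x in l, τ x < 1 ∧ F x (τ x) = g x) (hr : ∀ᶠ x in l, 0 < r x)
    (hw : ∀ᶠ x in l, 0 < w x) {c A B : ℝ} (hc : 0 < c)
    (hF : Tendsto (fun x => w x * F x (1 - c * r x)) l (𝓝 A))
    (hg : Tendsto (fun x => w x * g x) l (𝓝 B)) (hAB : A < B) :
    ∀ᶠ x in l, (1 - τ x) / r x < c := by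
  filter_upwards [hmono, hroot, hr, hw, hF.eventually_lt hg hAB]
    with x hmonox ⟨hτx, hτroot⟩ hrx hwx hlt
  have hFlt : F x (1 - c * r x) < F x (τ x) := hτroot ▸ lt_of_mul_lt_mul_left hlt hwx.le
  have hlt := hmonox.reflect_lt (by simpa using mul_pos hc hrx) hτx hFlt
  rw [div_lt_iff₀ hrx]
  linarith

theorem eventually_lt_one_sub_root_div (hmono : ∀ᶠ x in l, MonotoneOn (F x) (Iio 1))
    (hroot : ∀ᶠ x in l, τ x < 1 ∧ F x (τ x) = g x) (hr : ∀ᶠ x in l, 0 < r x)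
    (hw : ∀ᶠ x in l, 0 < w x) {c A B : ℝ} (hc : 0 < c)
    (hF : Tendsto (fun x => w x * F x (1 - c * r x)) l (𝓝 A))
    (hg : Tendsto (fun x => w x * g x) l (𝓝 B)) (hBA : B < A) :
    ∀ᶠ x in l, c < (1 - τ x) / r x := by
  filter_upwards [hmono, hroot, hr, hw, hg.eventually_lt hF hBA]
    with x hmonox ⟨hτx, hτroot⟩ hrx hwx hlt
  have hFlt : F x (τ x) < F x (1 - c * r x) := hτroot ▸ lt_of_mul_lt_mul_left hlt hwx.le
  have hlt := hmonox.reflect_lt hτx (by simpa using mul_pos hc hrx) hFlt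
  rw [lt_div_iff₀ hrx]
  linarith

theorem tendsto_one_sub_root_div (hmono : ∀ᶠ x in l, MonotoneOn (F x) (Iio 1))
    (hroot : ∀ᶠ x in l, τ x < 1 ∧ F x (τ x) = g x) (hr : ∀ᶠ x in l, 0 < r x)
    (hw : ∀ᶠ x in l, 0 < w x) {A : ℝ → ℝ} {B L : ℝ} (hL : 0 ≤ L)
    (hF : ∀ c > 0, Tendsto (fun x => w x * F x (1 - c * r x)) l (𝓝 (A c)))
    (hg : Tendsto (fun x => w x * g x) l (𝓝 B))
    (hA_lt : ∀ c > L, A c < B) (hlt_A : ∀ c ∈ Ioo 0 L, B < A c) :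
    Tendsto (fun x => (1 - τ x) / r x) l (𝓝 L) := by
  refine tendsto_order.2 ⟨fun c hcL => ?_, fun c hLc => ?_⟩
  · rcases le_or_gt c 0 with hc | hc
    · filter_upwards [hroot, hr] with x ⟨hτx, _⟩ hrx
      exact hc.trans_lt (div_pos (sub_pos.2 hτx) hrx)
    · exact eventually_lt_one_sub_root_div hmono hroot hr hw hc (hF c hc) hg
        (hlt_A c ⟨hc, hcL⟩)
  · have hc := hL.trans_lt hLc
    exact eventually_one_sub_root_div_lt hmono hroot hr hw hc (hF c hc) hg (hA_lt c hLc)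

end RootAsymptotics

noncomputable def FBEM (θ : ℝ) (ψ : ℝ → ℝ) (ac φ a : ℝ) : ℝ :=
  a / (1 - a) +
      (Real.sin θ * Real.sin φ / Real.cos (θ - φ)) * ψ (max (a - ac) 0) / (1 - a) ^ 2

lemma sin_eq_mul_sinc (x : ℝ) : sin x = x * sinc x := by
  rcases eq_or_ne x 0 with rfl | hx
  · simp
  · rw [sinc_of_ne_zero hx, mul_div_cancel₀ _ hx]

lemma eventually_sinc_ne_zero : ∀ᶠ φ in 𝓝[>] (0 : ℝ), sinc φ ≠ 0 := by
  filter_upwards [Ioo_mem_nhdsGT pi_pos] with φ hφ h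
  apply (sin_pos_of_pos_of_lt_pi hφ.1 hφ.2).ne'
  rw [sin_eq_mul_sinc, h, mul_zero]

lemma rpow_three_halves {x : ℝ} (hx : 0 ≤ x) : x ^ ((3 : ℝ) / 2) = x * √x := by
  rw [show (3 : ℝ) / 2 = 1 + 1 / 2 by norm_num, rpow_add' hx (by norm_num), rpow_one,
    sqrt_eq_rpow]

section BEM

variable {θ ac : ℝ} {μD ψ : ℝ → ℝ}

theorem tendsto_sq_mul_gBEM (hθ : cos θ ≠ 0) (hμD : ContinuousWithinAt μD (Ioi 0) 0) :
    Tendsto (fun φ => φ ^ 2 * gBEM θ μD φ) (𝓝[>] 0) (𝓝 (μD 0 * tan θ)) := by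
  have hcot : ContinuousAt (fun φ => φ * (cos φ * (sin (θ - φ) / cos (θ - φ)) / sinc φ)) 0 := by
    fun_prop (disch := simp [hθ, sinc_zero])
  have hfrac : ContinuousAt
      (fun φ => (φ + cos φ * (sin (θ - φ) / cos (θ - φ)) / sinc φ) / sinc φ) 0 := by
    fun_prop (disch := simp [hθ, sinc_zero])
  have hlim := (hcot.tendsto.mono_left nhdsWithin_le_nhds).add
    (hμD.tendsto.mul (hfrac.tendsto.mono_left nhdsWithin_le_nhds))
  have hval : 0 * (cos 0 * (sin (θ - 0) / cos (θ - 0)) / sinc 0) +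
      μD 0 * ((0 + cos 0 * (sin (θ - 0) / cos (θ - 0)) / sinc 0) / sinc 0) = μD 0 * tan θ := by
    simp [sinc_zero, tan_eq_sin_div_cos]
  refine Tendsto.congr' ?_ (hval ▸ hlim)
  filter_upwards [self_mem_nhdsWithin, eventually_sinc_ne_zero] with φ (hφ : 0 < φ) hsinc
  simp only [gBEM, sin_eq_mul_sinc φ, tan_eq_sin_div_cos]
  field_simp

theorem tendsto_sq_mul_FBEM (hθ : cos θ ≠ 0) (hac : ac < 1) (hψ : ContinuousAt ψ (1 - ac))
    {c : ℝ} (hc : c ≠ 0) :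
    Tendsto (fun φ => φ ^ 2 * FBEM θ ψ ac φ (1 - c * φ ^ ((3 : ℝ) / 2))) (𝓝[>] 0)
      (𝓝 (tan θ * ψ (1 - ac) / c ^ 2)) := by
  have hinner : Tendsto (fun φ : ℝ => max (1 - c * φ ^ ((3 : ℝ) / 2) - ac) 0) (𝓝[>] 0)
      (𝓝 (1 - ac)) := by
    have hcont : ContinuousAt (fun φ : ℝ => max (1 - c * φ ^ ((3 : ℝ) / 2) - ac) 0) 0 := by
      fun_prop (disch := norm_num)
    simpa [hac.le] using hcont.tendsto.mono_left nhdsWithin_le_nhds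
  have hsqrt : ContinuousAt (fun φ : ℝ => √φ * (1 - c * φ ^ ((3 : ℝ) / 2)) / c) 0 := by
    fun_prop (disch := norm_num)
  have hcoef : ContinuousAt (fun φ => sin θ * sinc φ / cos (θ - φ) / c ^ 2) 0 := by
    fun_prop (disch := simp [hθ])
  have hlim := (hsqrt.tendsto.mono_left nhdsWithin_le_nhds).add
    ((hcoef.tendsto.mono_left nhdsWithin_le_nhds).mul (hψ.tendsto.comp hinner))
  have hval : √0 * (1 - c * 0 ^ ((3 : ℝ) / 2)) / c +
      sin θ * sinc 0 / cos (θ - 0) / c ^ 2 * ψ (1 - ac) = tan θ * ψ (1 - ac) / c ^ 2 := by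
    simp [sinc_zero, tan_eq_sin_div_cos]
    ring
  refine Tendsto.congr' ?_ (hval ▸ hlim)
  filter_upwards [self_mem_nhdsWithin, eventually_sinc_ne_zero] with φ (hφ : 0 < φ) hsinc
  obtain ⟨s, hs, rfl⟩ : ∃ s, 0 < s ∧ φ = s ^ 2 := ⟨√φ, sqrt_pos.2 hφ, (sq_sqrt hφ.le).symm⟩
  simp only [FBEM, Function.comp_apply, rpow_three_halves hφ.le, sqrt_sq hs.le,
    sin_eq_mul_sinc (s ^ 2)]
  field_simp
  ring

theorem monotoneOn_FBEM {φ : ℝ} (hK : 0 ≤ sin θ * sin φ / cos (θ - φ))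
    (hψmono : MonotoneOn ψ (Ici 0)) (hψnn : ∀ x ∈ Ici (0 : ℝ), 0 ≤ ψ x) :
    MonotoneOn (FBEM θ ψ ac φ) (Iio 1) := by
  intro a ha b hb hab
  have ha1 : 0 < 1 - a := sub_pos.2 ha
  have hb1 : 0 < 1 - b := sub_pos.2 hb
  have hmem (x : ℝ) : max (x - ac) 0 ∈ Ici 0 := mem_Ici.2 (le_max_right _ _)
  have hψab : ψ (max (a - ac) 0) ≤ ψ (max (b - ac) 0) := hψmono (hmem a) (hmem b) (by gcongr)
  unfold FBEM
  gcongr ?_ + ?_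
  · rw [div_le_div_iff₀ ha1 hb1]
    nlinarith
  · exact div_le_div₀ (mul_nonneg hK (hψnn _ (hmem b)))
      (mul_le_mul_of_nonneg_left hψab hK) (pow_pos hb1 2) (by gcongr)

end BEM

theorem bem_tau_asymptotics_general
    (θ m : ℝ) (hθ : θ ∈ Ioo 0 (π / 2))
    (hm : m ∈ Ioc 0 θ)
    (μD : ℝ → ℝ) (hμDc : ContinuousOn μD (Icc 0 m))
    (hμD0 : 0 < μD 0)
    (ac : ℝ) (hac : ac ∈ Ioo (0 : ℝ) 1)
    (ψ : ℝ → ℝ) (hψc : ContinuousOn ψ (Ici 0)) (hψmono : MonotoneOn ψ (Ici 0))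
    (hψnn : ∀ x ∈ Ici (0 : ℝ), 0 ≤ ψ x)
    (τ : ℝ → ℝ)
    (hτ : ∀ φ ∈ Ioc 0 m, τ φ ∈ Ico (0 : ℝ) 1 ∧ EBEM θ μD ψ ac φ (τ φ)) :
    Filter.Tendsto (fun φ : ℝ => (1 - τ φ) / φ ^ ((3 : ℝ) / 2))
      (nhdsWithin 0 (Ioi 0)) (nhds (Real.sqrt (ψ (1 - ac) / μD 0))) := by
  obtain ⟨hθ0, hθπ⟩ := hθ
  obtain ⟨hm0, hmθ⟩ := hm
  have hcosθ : 0 < cos θ := cos_pos_of_mem_Ioo ⟨by linarith, hθπ⟩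
  have htanθ : 0 < tan θ := tan_pos_of_pos_of_lt_pi_div_two hθ0 hθπ
  have hnear : ∀ᶠ φ in 𝓝[>] 0, φ ∈ Ioc 0 m := Ioc_mem_nhdsGT hm0
  have hpos : ∀ᶠ φ in 𝓝[>] (0 : ℝ), 0 < φ := self_mem_nhdsWithin
  have hμD : ContinuousWithinAt μD (Ioi 0) 0 := (hμDc 0 ⟨le_rfl, hm0.le⟩).mono_of_mem_nhdsWithin
    (mem_of_superset hnear Ioc_subset_Icc_self)
  have hψ : ContinuousAt ψ (1 - ac) := hψc.continuousAt (Ici_mem_nhds (by linarith [hac.2]))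
  refine tendsto_one_sub_root_div (F := FBEM θ ψ ac) (w := fun φ => φ ^ 2)
    (A := fun c => tan θ * ψ (1 - ac) / c ^ 2) ?_ ?_ (hpos.mono fun φ hφ => rpow_pos_of_pos hφ _)
    (hpos.mono fun φ hφ => pow_pos hφ 2) (sqrt_nonneg _)
    (fun c hc => tendsto_sq_mul_FBEM hcosθ.ne' hac.2 hψ hc.ne')
    (tendsto_sq_mul_gBEM hcosθ.ne' hμD) (fun c hc => ?_) (fun c hc => ?_)
  · filter_upwards [hnear] with φ ⟨hφ0, hφm⟩
    have hsinθ : 0 < sin θ := sin_pos_of_pos_of_lt_pi hθ0 (by linarith [pi_pos])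
    have hsinφ : 0 < sin φ := sin_pos_of_pos_of_lt_pi hφ0 (by linarith [pi_pos])
    have hcos : 0 < cos (θ - φ) := cos_pos_of_mem_Ioo ⟨by linarith, by linarith⟩
    exact monotoneOn_FBEM (by positivity) hψmono hψnn
  · filter_upwards [hnear] with φ hφ using ⟨(hτ φ hφ).1.2, (hτ φ hφ).2⟩
  · have hc0 := (sqrt_nonneg _).trans_lt hc
    rw [gt_iff_lt, sqrt_lt' hc0, div_lt_iff₀ hμD0] at hc
    rw [div_lt_iff₀ (by positivity)]
    nlinarith
  · obtain ⟨hc0, hc⟩ := hc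
    rw [lt_sqrt hc0.le, lt_div_iff₀ hμD0] at hc
    rw [lt_div_iff₀ (by positivity)]
    nlinarith

/-- Asymptotic behavior of `τ` near `0`:
`(1 − τ(φ))/φ^{3/2} → √(ψ(1 − a_c)/μ_D(0))` as `φ → 0⁺`, i.e.
`τ(φ) = 1 − √(ψ(1 − a_c)/μ_D(0)) · φ^{3/2} + o(φ^{3/2})`. -/
theorem bem_tau_asymptotics
    (lam θ m : ℝ) (hlam : 0 < lam) (hθ : θ ∈ Ioo 0 (π / 2))
    (htan : Real.tan θ = 1 / lam) (hm : m ∈ Ioc 0 θ)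
    (μD : ℝ → ℝ) (hμDc : ContinuousOn μD (Icc 0 m))
    (hμDnn : ∀ φ ∈ Icc 0 m, 0 ≤ μD φ) (hμD0 : 0 < μD 0)
    (ac : ℝ) (hac : ac ∈ Ioo (0 : ℝ) 1)
    (ψ : ℝ → ℝ) (hψc : ContinuousOn ψ (Ici 0)) (hψmono : MonotoneOn ψ (Ici 0))
    (hψ0 : ψ 0 = 0) (hψnn : ∀ x ∈ Ici (0 : ℝ), 0 ≤ ψ x)
    (τ : ℝ → ℝ)
    (hτ : ∀ φ ∈ Ioc 0 m, τ φ ∈ Ico (0 : ℝ) 1 ∧ EBEM θ μD ψ ac φ (τ φ))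
    (hτuniq : ∀ φ ∈ Ioc 0 m, ∀ a ∈ Ico (0 : ℝ) 1, EBEM θ μD ψ ac φ a → a = τ φ) :
    Filter.Tendsto (fun φ : ℝ => (1 - τ φ) / φ ^ ((3 : ℝ) / 2))
      (nhdsWithin 0 (Ioi 0)) (nhds (Real.sqrt (ψ (1 - ac) / μD 0))) :=
  bem_tau_asymptotics_general θ m hθ hm μD hμDc hμD0 ac hac ψ hψc hψmono hψnn τ hτ
end

section
/- Let λ > 0 with θ_λ ∈ (0, π/2) defined by tan θ_λ = 1/λ, let m ∈ (0, θ_λ], let μ_D : [0, m] → [0, ∞) be continuous with μ_D(0) > 0, let (ψ, a_c) be a correction pair with ψ(1 − a_c) > 0, let τ : (0, m] → [0, 1) be the map sending φ to the unique a ∈ [0, 1) satisfying E(φ, a), and define μ_G^c(φ) := μ_G(φ) + (cos θ_λ · sin² φ / cos(θ_λ − φ)) · ψ((τ(φ) − a_c)_+)/(1 − τ(φ))² on (0, m]. Then φ · μ_G^c(φ) → μ_D(0) as φ → 0⁺; in particular μ_G^c(φ) → +∞ as φ → 0⁺. -/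
open Real Set

/-- The corrected macroscopic function
`μ_G^c(φ) = μ_G(φ) + (cos θ · sin²φ / cos(θ−φ)) · ψ((τ(φ)−a_c)_+)/(1−τ(φ))²`. -/
noncomputable def muGc (θ : ℝ) (ψ : ℝ → ℝ) (ac : ℝ) (τ : ℝ → ℝ) (φ : ℝ) : ℝ :=
  Real.sin φ * Real.tan (θ - φ) +
    (Real.cos θ * Real.sin φ ^ 2 / Real.cos (θ - φ)) * ψ (max (τ φ - ac) 0) / (1 - τ φ) ^ 2

open Filter Topology

/-! Solving `E(φ, τ φ)` for the correction term gives
`φ μ_G^c(φ) = φ sin φ tan(θ − φ) + cot θ · (φ sin φ g(φ) − φ sin φ τ/(1 − τ))`.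
Since `g(φ) ~ μ_D(0) tan θ / φ²`, the middle term tends to `μ_D(0)`, and it remains to see
that `φ sin φ τ/(1 − τ) → 0`. Fix `b < 1` with `ε := ψ(b − a_c) > 0`. Either `τ < b`, or `E`
forces `c ε/(1 − τ)² ≤ g` with `c = sin θ sin φ / cos(θ − φ) ≍ φ`; in both cases
`(φ sin φ/(1 − τ))² = O(φ)`. -/

theorem tendsto_div_sin_nhdsNE_zero : Tendsto (fun x => x / sin x) (𝓝[≠] 0) (𝓝 1) := by
  have h := (continuous_sinc.tendsto 0).inv₀ (by simp [sinc_zero] : sinc 0 ≠ 0)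
  rw [sinc_zero, inv_one] at h
  refine (h.mono_left nhdsWithin_le_nhds).congr' ?_
  filter_upwards [self_mem_nhdsWithin] with x hx
  rw [sinc_of_ne_zero hx, inv_div]

theorem tendsto_tan_sub_nhds_zero {θ : ℝ} (hθ : cos θ ≠ 0) :
    Tendsto (fun φ => tan (θ - φ)) (𝓝 0) (𝓝 (tan θ)) := by
  have h : Tendsto (fun φ : ℝ => θ - φ) (𝓝 0) (𝓝 θ) := by
    simpa using (continuous_sub_left θ).tendsto 0
  exact (continuousAt_tan.mpr hθ).tendsto.comp h

theorem tendsto_mul_sin_mul_gBEM {θ d : ℝ} {μD : ℝ → ℝ} (hθ : cos θ ≠ 0)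
    (hμD : Tendsto μD (𝓝[>] 0) (𝓝 d)) :
    Tendsto (fun φ => φ * sin φ * gBEM θ μD φ) (𝓝[>] 0) (𝓝 (d * tan θ)) := by
  have hid : Tendsto (fun φ : ℝ => φ) (𝓝[>] 0) (𝓝 0) :=
    tendsto_nhdsWithin_of_tendsto_nhds tendsto_id
  have hcos : Tendsto cos (𝓝[>] 0) (𝓝 1) := by
    simpa using (continuous_cos.tendsto 0).mono_left nhdsWithin_le_nhds
  have htan := (tendsto_tan_sub_nhds_zero hθ).mono_left (nhdsWithin_le_nhds (s := Ioi 0))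
  have hdiv := tendsto_div_sin_nhdsNE_zero.mono_left (nhdsGT_le_nhdsNE 0)
  have h := (((hid.mul hcos).mul htan).add (hid.mul hμD)).add
    (hdiv.mul ((hμD.mul hcos).mul htan))
  rw [zero_mul, zero_mul, zero_mul, zero_add, zero_add, one_mul, mul_one] at h
  refine h.congr' ?_
  filter_upwards [Ioo_mem_nhdsGT pi_pos] with φ hφ
  have := (sin_pos_of_pos_of_lt_pi hφ.1 hφ.2).ne'
  simp only [gBEM]
  field_simp
  ring

theorem inv_one_sub_sq_le_max {u b c ε P g : ℝ} (hu0 : 0 ≤ u) (hu1 : u < 1) (hb : b < 1)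
    (hc : 0 < c) (hε : 0 < ε) (hP : b ≤ u → ε ≤ P)
    (heq : u / (1 - u) + c * P / (1 - u) ^ 2 = g) :
    1 / (1 - u) ^ 2 ≤ max (1 / (1 - b) ^ 2) (g / (c * ε)) := by
  have hu : 0 < 1 - u := sub_pos.2 hu1
  rcases lt_or_ge u b with hub | hbu
  · exact le_max_of_le_left (one_div_le_one_div_of_le (by positivity) (by nlinarith))
  · refine le_max_of_le_right ?_
    rw [le_div_iff₀ (by positivity), ← heq]
    have hεP : c * ε / (1 - u) ^ 2 ≤ c * P / (1 - u) ^ 2 := by gcongr; exact hP hbu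
    have : 0 ≤ u / (1 - u) := div_nonneg hu0 hu.le
    calc 1 / (1 - u) ^ 2 * (c * ε) = c * ε / (1 - u) ^ 2 := by ring
      _ ≤ _ := by linarith

theorem tendsto_zero_of_sq_le {α : Type*} {l : Filter α} {y H : α → ℝ}
    (hH : Tendsto H l (𝓝 0)) (hy : ∀ᶠ x in l, 0 ≤ y x ∧ y x ^ 2 ≤ H x) :
    Tendsto y l (𝓝 0) := by
  have hs : Tendsto (fun x => √(H x)) l (𝓝 0) := by simpa using hH.sqrt
  exact squeeze_zero' (hy.mono fun x hx => hx.1)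
    (hy.mono fun x hx => Real.le_sqrt_of_sq_le hx.2) hs

theorem muGc_eq_of_EBEM {θ ac φ : ℝ} {μD ψ τ : ℝ → ℝ} (hθ : sin θ ≠ 0)
    (hE : EBEM θ μD ψ ac φ (τ φ)) :
    muGc θ ψ ac τ φ = sin φ * tan (θ - φ) +
      cos θ / sin θ * (sin φ * (gBEM θ μD φ - τ φ / (1 - τ φ))) := by
  rw [muGc, ← hE, add_sub_cancel_left]
  field_simp

theorem exists_lt_forall_le_apply_max_zero {ψ : ℝ → ℝ} {t : ℝ} (ht : 0 < t)
    (hc : ContinuousAt ψ t) (hmono : MonotoneOn ψ (Ici 0)) (hpos : 0 < ψ t) :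
    ∃ s < t, ∃ ε > 0, ∀ x, s ≤ x → ε ≤ ψ (max x 0) := by
  obtain ⟨s, hψs, hs⟩ : ∃ s, 0 < ψ s ∧ s ∈ Ioo 0 t :=
    ((hc.eventually (lt_mem_nhds hpos)).filter_mono nhdsWithin_le_nhds |>.and
      (Ioo_mem_nhdsLT ht)).exists
  exact ⟨s, hs.2, ψ s, hψs, fun x hx =>
    hmono hs.1.le (mem_Ici.2 (le_max_right _ _)) (hx.trans (le_max_left _ _))⟩

theorem tendsto_mul_sin_mul_div_one_sub {θ m b ε ac L : ℝ} {μD ψ τ : ℝ → ℝ}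
    (hθ : θ ∈ Ioo 0 (π / 2)) (hm : m ∈ Ioc 0 θ) (hb : b < 1) (hε : 0 < ε)
    (hψ : ∀ a, b ≤ a → ε ≤ ψ (max (a - ac) 0))
    (hτ : ∀ φ ∈ Ioc 0 m, τ φ ∈ Ico (0 : ℝ) 1 ∧ EBEM θ μD ψ ac φ (τ φ))
    (hL : Tendsto (fun φ => φ * sin φ * gBEM θ μD φ) (𝓝[>] 0) (𝓝 L)) :
    Tendsto (fun φ => φ * sin φ * (τ φ / (1 - τ φ))) (𝓝[>] 0) (𝓝 0) := by
  have hsinθ : 0 < sin θ := sin_pos_of_pos_of_lt_pi hθ.1 (by linarith [hθ.2, pi_pos])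
  set H : ℝ → ℝ := fun φ => max ((φ * sin φ) ^ 2 * (1 / (1 - b) ^ 2))
    (φ * (φ * sin φ * gBEM θ μD φ) * cos (θ - φ) / (sin θ * ε))
  have hH : Tendsto H (𝓝[>] 0) (𝓝 0) := by
    have hid : Tendsto (fun φ : ℝ => φ) (𝓝[>] 0) (𝓝 0) :=
      tendsto_nhdsWithin_of_tendsto_nhds tendsto_id
    have hsin : Tendsto sin (𝓝[>] 0) (𝓝 0) := by
      simpa using (continuous_sin.tendsto 0).mono_left nhdsWithin_le_nhds
    have hcos : Tendsto (fun φ => cos (θ - φ)) (𝓝[>] 0) (𝓝 (cos θ)) := by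
      simpa [Function.comp_def] using
        ((continuous_cos.comp (continuous_sub_left θ)).tendsto 0).mono_left nhdsWithin_le_nhds
    simpa using (((hid.mul hsin).pow 2).mul_const _).max (((hid.mul hL).mul hcos).div_const _)
  refine tendsto_zero_of_sq_le hH ?_
  filter_upwards [Ioc_mem_nhdsGT hm.1] with φ hφ
  obtain ⟨⟨hτ0, hτ1⟩, hE⟩ := hτ φ hφ
  have hu : 0 < 1 - τ φ := sub_pos.2 hτ1
  have hsin : 0 < sin φ := sin_pos_of_pos_of_lt_pi hφ.1 (by linarith [hφ.2, hm.2, hθ.2, pi_pos])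
  have hcos : 0 < cos (θ - φ) :=
    cos_pos_of_mem_Ioo ⟨by linarith [hφ.2, hm.2, hθ.1, pi_pos], by linarith [hφ.1, hθ.2]⟩
  have hX := inv_one_sub_sq_le_max hτ0 hτ1 hb (by positivity) hε (hψ _) hE
  refine ⟨mul_nonneg (mul_nonneg hφ.1.le hsin.le) (div_nonneg hτ0 hu.le), ?_⟩
  calc (φ * sin φ * (τ φ / (1 - τ φ))) ^ 2
      = (φ * sin φ) ^ 2 * (τ φ ^ 2 / (1 - τ φ) ^ 2) := by rw [mul_pow, div_pow]
    _ ≤ (φ * sin φ) ^ 2 * (1 / (1 - τ φ) ^ 2) := by gcongr; nlinarith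
    _ ≤ (φ * sin φ) ^ 2 *
        max (1 / (1 - b) ^ 2) (gBEM θ μD φ / (sin θ * sin φ / cos (θ - φ) * ε)) := by gcongr
    _ = H φ := by
      rw [mul_max_of_nonneg _ _ (by positivity)]
      congr 1
      field_simp

theorem tendsto_mul_muGc {θ m ac L : ℝ} {μD ψ τ : ℝ → ℝ} (hsinθ : sin θ ≠ 0)
    (hcosθ : cos θ ≠ 0) (hm : 0 < m)
    (hE : ∀ φ ∈ Ioc 0 m, EBEM θ μD ψ ac φ (τ φ))
    (hL : Tendsto (fun φ => φ * sin φ * gBEM θ μD φ) (𝓝[>] 0) (𝓝 L))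
    (hτ : Tendsto (fun φ => φ * sin φ * (τ φ / (1 - τ φ))) (𝓝[>] 0) (𝓝 0)) :
    Tendsto (fun φ => φ * muGc θ ψ ac τ φ) (𝓝[>] 0) (𝓝 (cos θ / sin θ * L)) := by
  have hsin : Tendsto (fun φ => φ * sin φ) (𝓝[>] 0) (𝓝 0) :=
    ((by fun_prop : Continuous fun φ : ℝ => φ * sin φ).tendsto' 0 0 (by simp)).mono_left
      nhdsWithin_le_nhds
  have htan := (tendsto_tan_sub_nhds_zero hcosθ).mono_left (nhdsWithin_le_nhds (s := Ioi 0))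
  have h := (hsin.mul htan).add ((hL.sub hτ).const_mul (cos θ / sin θ))
  rw [zero_mul, zero_add, sub_zero] at h
  refine h.congr' ?_
  filter_upwards [Ioc_mem_nhdsGT hm] with φ hφ
  rw [muGc_eq_of_EBEM hsinθ (hE φ hφ)]
  ring

theorem bem_muGc_blowup_general
    (θ m : ℝ) (hθ : θ ∈ Ioo 0 (π / 2))
    (hm : m ∈ Ioc 0 θ)
    (μD : ℝ → ℝ) (hμDc : ContinuousOn μD (Icc 0 m))
    (hμD0 : 0 < μD 0)
    (ac : ℝ) (hac : ac ∈ Ioo (0 : ℝ) 1)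
    (ψ : ℝ → ℝ) (hψc : ContinuousOn ψ (Ici 0)) (hψmono : MonotoneOn ψ (Ici 0))
    (hψac : 0 < ψ (1 - ac))
    (τ : ℝ → ℝ)
    (hτ : ∀ φ ∈ Ioc 0 m, τ φ ∈ Ico (0 : ℝ) 1 ∧ EBEM θ μD ψ ac φ (τ φ)) :
    Filter.Tendsto (fun φ : ℝ => φ * muGc θ ψ ac τ φ)
      (nhdsWithin 0 (Ioi 0)) (nhds (μD 0)) ∧
    Filter.Tendsto (muGc θ ψ ac τ) (nhdsWithin 0 (Ioi 0)) Filter.atTop := by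
  have hsinθ : 0 < sin θ := sin_pos_of_pos_of_lt_pi hθ.1 (by linarith [hθ.2, pi_pos])
  have hcosθ : 0 < cos θ := cos_pos_of_mem_Ioo ⟨by linarith [hθ.1, pi_pos], hθ.2⟩
  have hμD : Tendsto μD (𝓝[>] 0) (𝓝 (μD 0)) := by
    refine (hμDc 0 ⟨le_rfl, hm.1.le⟩).tendsto.mono_left ?_
    rw [← nhdsWithin_Ioc_eq_nhdsGT hm.1]
    exact nhdsWithin_mono _ Ioc_subset_Icc_self
  have hg := tendsto_mul_sin_mul_gBEM hcosθ.ne' hμD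
  have h1ac : 0 < 1 - ac := sub_pos.2 hac.2
  obtain ⟨s, hs, ε, hε, hψs⟩ := exists_lt_forall_le_apply_max_zero h1ac
    (hψc.continuousAt (Ici_mem_nhds h1ac)) hψmono hψac
  have hy := tendsto_mul_sin_mul_div_one_sub hθ hm (b := s + ac) (by linarith) hε
    (fun a ha => hψs _ (by linarith)) hτ hg
  have hmain := tendsto_mul_muGc hsinθ.ne' hcosθ.ne' hm.1 (fun φ hφ => (hτ φ hφ).2) hg hy
  have hcot_mul_tan : cos θ / sin θ * (μD 0 * tan θ) = μD 0 := by
    rw [tan_eq_sin_div_cos]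
    field_simp
  rw [hcot_mul_tan] at hmain
  refine ⟨hmain, (hmain.pos_mul_atTop hμD0 tendsto_inv_nhdsGT_zero).congr' ?_⟩
  filter_upwards [self_mem_nhdsWithin] with φ (hφ : 0 < φ)
  field_simp

/-- If `μ_D(0) > 0` and `ψ(1 − a_c) > 0`, then `φ · μ_G^c(φ) → μ_D(0)` as
`φ → 0⁺`; in particular `μ_G^c(φ) → +∞` as `φ → 0⁺`. -/
theorem bem_muGc_blowup
    (lam θ m : ℝ) (hlam : 0 < lam) (hθ : θ ∈ Ioo 0 (π / 2))
    (htan : Real.tan θ = 1 / lam) (hm : m ∈ Ioc 0 θ)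
    (μD : ℝ → ℝ) (hμDc : ContinuousOn μD (Icc 0 m))
    (hμDnn : ∀ φ ∈ Icc 0 m, 0 ≤ μD φ) (hμD0 : 0 < μD 0)
    (ac : ℝ) (hac : ac ∈ Ioo (0 : ℝ) 1)
    (ψ : ℝ → ℝ) (hψc : ContinuousOn ψ (Ici 0)) (hψmono : MonotoneOn ψ (Ici 0))
    (hψ0 : ψ 0 = 0) (hψnn : ∀ x ∈ Ici (0 : ℝ), 0 ≤ ψ x)
    (hψac : 0 < ψ (1 - ac))
    (τ : ℝ → ℝ)
    (hτ : ∀ φ ∈ Ioc 0 m, τ φ ∈ Ico (0 : ℝ) 1 ∧ EBEM θ μD ψ ac φ (τ φ))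
    (hτuniq : ∀ φ ∈ Ioc 0 m, ∀ a ∈ Ico (0 : ℝ) 1, EBEM θ μD ψ ac φ a → a = τ φ) :
    Filter.Tendsto (fun φ : ℝ => φ * muGc θ ψ ac τ φ)
      (nhdsWithin 0 (Ioi 0)) (nhds (μD 0)) ∧
    Filter.Tendsto (muGc θ ψ ac τ) (nhdsWithin 0 (Ioi 0)) Filter.atTop :=
  bem_muGc_blowup_general θ m hθ hm μD hμDc hμD0 ac hac ψ hψc hψmono hψac τ hτ
end

section
/- Let λ > 0 with θ_λ ∈ (0, π/2) defined by tan θ_λ = 1/λ. Let μ_L, μ_D : (0, θ_λ] → [0, ∞) be continuously differentiable, non-negative and non-decreasing, with M := sup_{(0,θ_λ]} μ_L' < ∞, and assume D(φ) := max{0, −μ_G'(φ)} + M + (1 + tan² θ_λ) μ_D(φ) > 0 for all φ ∈ (0, θ_λ]. Fix ε ∈ (0, 1), set ρ_ε(φ) := ε/D(φ) and f(φ) := φ + ρ_ε(φ)(μ_G(φ) − μ_L(φ) + tan(θ_λ − φ) μ_D(φ)). Suppose the set S := {φ ∈ (0, θ_λ] : μ_L(φ) − tan(θ_λ − φ) μ_D(φ)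 = μ_G(φ)} is non-empty, and let φ* := max S (which exists). Then the sequence defined by φ⁰ = θ_λ and φ^{k+1} = f(φ^k) remains in [φ*, θ_λ] for all k and converges to φ*. -/
/-!
The residual `g φ = μ_G φ - μ_L φ + tan (θ - φ) μ_D φ` vanishes exactly on `S`, so `φ*` is the
largest zero of `g`. As `g θ = -μ_L θ ≤ 0` and `g` has no zero in `(φ*, θ]`, the intermediate value
theorem gives `g ≤ 0` on `[φ*, θ]`: the iteration `f φ = φ + ρ_ε φ * g φ` moves left. It does not
overshoot `φ*`: `μ_G' φ = cos θ tan (θ - φ) / cos (θ - φ) - sin φ` is decreasing, and with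
`μ_L' ≤ M` and `μ_D` monotone this gives `-g' ξ ≤ D φ` for `ξ ≤ φ`, so by the mean value theorem
`ρ_ε φ * g φ ≥ -ε (φ - φ*)`. Hence the iterates decrease in `[φ*, θ]` to a fixed point of the
continuous map `f`, i.e. to a zero of `g` in `[φ*, θ]`, which is `φ*`.
-/

open Real Set

/-- The macroscopic function `μ_G(φ) = sin φ · tan (θ − φ)`. -/
noncomputable def muG (θ φ : ℝ) : ℝ := Real.sin φ * Real.tan (θ - φ)

/-- The derivative of `μ_G`: `μ_G'(φ) = cos φ · tan(θ − φ) − sin φ / cos²(θ − φ)`. -/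
noncomputable def muGderiv (θ φ : ℝ) : ℝ :=
  Real.cos φ * Real.tan (θ - φ) - Real.sin φ / Real.cos (θ - φ) ^ 2

open Filter Topology

theorem ContinuousOn.exists_isGreatest_zero {f : ℝ → ℝ} {a b : ℝ} (hf : ContinuousOn f (Ioc a b))
    (h : ∃ x ∈ Ioc a b, f x = 0) : ∃ c, IsGreatest {x ∈ Ioc a b | f x = 0} c := by
  obtain ⟨x₀, hx₀, hfx₀⟩ := h
  have hsub : Icc x₀ b ⊆ Ioc a b := fun x hx => ⟨hx₀.1.trans_le hx.1, hx.2⟩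
  have hK : IsCompact (Icc x₀ b ∩ f ⁻¹' {0}) :=
    isCompact_Icc.of_isClosed_subset
      ((hf.mono hsub).preimage_isClosed_of_isClosed isClosed_Icc isClosed_singleton)
      inter_subset_left
  obtain ⟨c, ⟨hc, hfc⟩, hmax⟩ := hK.exists_isGreatest ⟨x₀, ⟨le_rfl, hx₀.2⟩, hfx₀⟩
  refine ⟨c, ⟨hsub hc, hfc⟩, fun x ⟨hx, hfx⟩ => ?_⟩
  rcases le_total x x₀ with h | h
  · exact h.trans hc.1
  · exact hmax ⟨⟨h, hx.2⟩, hfx⟩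

theorem ContinuousOn.nonpos_of_ne_zero {f : ℝ → ℝ} {a b : ℝ}
    (hf : ContinuousOn f (Icc a b)) (ha : f a ≤ 0) (hb : f b ≤ 0)
    (hzero : ∀ x ∈ Ioc a b, f x ≠ 0) : ∀ x ∈ Icc a b, f x ≤ 0 := by
  intro x hx
  rcases hx.1.eq_or_lt with rfl | hax
  · exact ha
  by_contra! hpos
  obtain ⟨c, hc, hfc⟩ :=
    intermediate_value_Icc' hx.2 (hf.mono (Icc_subset_Icc_left hax.le)) ⟨hb, hpos.le⟩
  exact hzero c ⟨hax.trans_le hc.1, hc.2⟩ hfc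

theorem add_mul_mem_Icc_of_neg_deriv_le {g g' : ℝ → ℝ} {a x C r : ℝ} (hax : a ≤ x)
    (hg : ContinuousOn g (Icc a x)) (hg' : ∀ ξ ∈ Ioo a x, HasDerivAt g (g' ξ) ξ)
    (hC : ∀ ξ ∈ Ioo a x, -g' ξ ≤ C) (ha : g a = 0) (hx : g x ≤ 0) (hr : 0 ≤ r)
    (hrC : r * C ≤ 1) : x + r * g x ∈ Icc a x := by
  have hgx : -C * (x - a) ≤ g x := by
    have := (convex_Icc a x).mul_sub_le_image_sub_of_le_deriv (C := -C) hg
      (fun ξ hξ => (hg' ξ (by rwa [interior_Icc] at hξ)).differentiableAt.differentiableWithinAt)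
      (fun ξ hξ => by
        rw [interior_Icc] at hξ
        rw [(hg' ξ hξ).deriv]
        linarith [hC ξ hξ])
      a (left_mem_Icc.2 hax) x (right_mem_Icc.2 hax) hax
    rwa [ha, sub_zero] at this
  constructor
  · nlinarith [mul_le_mul_of_nonneg_left hgx hr, mul_le_mul_of_nonneg_right hrC (sub_nonneg.2 hax)]
  · exact add_le_of_nonpos_right (mul_nonpos_of_nonneg_of_nonpos hr hx)

theorem iterate_mem_Icc_of_apply_mem_Icc {f : ℝ → ℝ} {a b : ℝ}
    (hmaps : ∀ x ∈ Icc a b, f x ∈ Icc a x) {x : ℝ} (hx : x ∈ Icc a b) (n : ℕ) :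
    f^[n] x ∈ Icc a x := by
  induction n with
  | zero => exact ⟨hx.1, le_rfl⟩
  | succ n ih =>
    rw [Function.iterate_succ_apply']
    have := hmaps _ ⟨ih.1, ih.2.trans hx.2⟩
    exact ⟨this.1, this.2.trans ih.2⟩

theorem tendsto_iterate_of_apply_mem_Icc {f : ℝ → ℝ} {a b : ℝ}
    (hmaps : ∀ x ∈ Icc a b, f x ∈ Icc a x) (hf : ContinuousOn f (Icc a b))
    (hfix : ∀ x ∈ Icc a b, f x = x → x = a) {x : ℝ} (hx : x ∈ Icc a b) :
    Tendsto (fun n => f^[n] x) atTop (𝓝 a) := by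
  set u := fun n => f^[n] x
  have hu : ∀ n, u n ∈ Icc a b := fun n =>
    Icc_subset_Icc_right hx.2 (iterate_mem_Icc_of_apply_mem_Icc hmaps hx n)
  have hsucc : ∀ n, u (n + 1) = f (u n) := fun n => Function.iterate_succ_apply' f n x
  have hanti : Antitone u := antitone_nat_of_succ_le fun n => hsucc n ▸ (hmaps _ (hu n)).2
  have hlim := tendsto_atTop_ciInf hanti ⟨a, forall_mem_range.2 fun n => (hu n).1⟩
  set L := ⨅ n, u n
  have hL : L ∈ Icc a b := isClosed_Icc.mem_of_tendsto hlim (Eventually.of_forall hu)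
  have hfL : f L = L := by
    refine tendsto_nhds_unique ?_ ((tendsto_add_atTop_iff_nat 1).2 hlim)
    simp only [hsucc]
    exact (hf L hL).tendsto.comp (tendsto_nhdsWithin_iff.2 ⟨hlim, Eventually.of_forall hu⟩)
  rwa [hfix L hL hfL] at hlim

theorem muGderiv_eq {θ φ : ℝ} (hc : cos (θ - φ) ≠ 0) :
    muGderiv θ φ = cos θ * tan (θ - φ) / cos (θ - φ) - sin φ := by
  have hθ : cos θ = cos φ * cos (θ - φ) - sin φ * sin (θ - φ) := by
    rw [← cos_add, add_sub_cancel]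
  have hpyth := sin_sq_add_cos_sq (θ - φ)
  rw [muGderiv, tan_eq_sin_div_cos, hθ]
  field_simp
  linear_combination sin φ * hpyth

theorem cos_const_sub_pos {θ φ : ℝ} (hθ : θ < π / 2) (hφ : 0 ≤ φ) (hφθ : φ ≤ θ) :
    0 < cos (θ - φ) :=
  cos_pos_of_mem_Ioo ⟨by linarith [pi_pos], by linarith⟩

theorem tan_const_sub_mem_Icc {θ φ : ℝ} (hθ : θ < π / 2) (hφ : 0 ≤ φ) (hφθ : φ ≤ θ) :
    tan (θ - φ) ∈ Icc 0 (tan θ) :=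
  ⟨tan_nonneg_of_nonneg_of_le_pi_div_two (by linarith) (by linarith),
    strictMonoOn_tan.monotoneOn ⟨by linarith [pi_pos], by linarith⟩
      ⟨by linarith [pi_pos], hθ⟩ (by linarith)⟩

theorem antitoneOn_muGderiv {θ : ℝ} (hθ : θ < π / 2) : AntitoneOn (muGderiv θ) (Icc 0 θ) := by
  intro x hx y hy hxy
  have hcx := cos_const_sub_pos hθ hx.1 hx.2
  have hcy := cos_const_sub_pos hθ hy.1 hy.2
  have hcosθ : 0 ≤ cos θ := cos_nonneg_of_mem_Icc ⟨by linarith [pi_pos, hx.1, hx.2], hθ.le⟩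
  have hsin : sin x ≤ sin y :=
    sin_le_sin_of_le_of_le_pi_div_two (by linarith [pi_pos, hx.1]) (by linarith [hy.2]) hxy
  have hcos : cos (θ - x) ≤ cos (θ - y) :=
    cos_le_cos_of_nonneg_of_le_pi (by linarith [hy.2]) (by linarith [pi_pos, hx.1]) (by linarith)
  have htan : tan (θ - y) ≤ tan (θ - x) :=
    strictMonoOn_tan.monotoneOn ⟨by linarith [pi_pos, hy.2], by linarith [hy.1]⟩
      ⟨by linarith [pi_pos, hx.2], by linarith [hx.1]⟩ (by linarith)
  have hquot : tan (θ - y) / cos (θ - y) ≤ tan (θ - x) / cos (θ - x) :=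
    div_le_div₀ (tan_const_sub_mem_Icc hθ hx.1 hx.2).1 htan hcx hcos
  rw [muGderiv_eq hcx.ne', muGderiv_eq hcy.ne', mul_div_assoc, mul_div_assoc]
  nlinarith [mul_le_mul_of_nonneg_left hquot hcosθ]

theorem hasDerivAt_tan_const_sub {θ φ : ℝ} (hc : cos (θ - φ) ≠ 0) :
    HasDerivAt (fun x => tan (θ - x)) (-(1 + tan (θ - φ) ^ 2)) φ := by
  have := (hasDerivAt_tan hc).comp_const_sub θ φ
  rwa [one_div, ← inv_one_add_tan_sq hc, inv_inv] at this

theorem hasDerivAt_muG {θ φ : ℝ} (hc : cos (θ - φ) ≠ 0) :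
    HasDerivAt (muG θ) (muGderiv θ φ) φ := by
  refine ((hasDerivAt_sin φ).mul (hasDerivAt_tan_const_sub hc)).congr_deriv ?_
  rw [muGderiv, ← inv_one_add_tan_sq hc, div_inv_eq_mul]
  ring

theorem continuousAt_muGderiv {θ φ : ℝ} (hc : cos (θ - φ) ≠ 0) :
    ContinuousAt (muGderiv θ) φ :=
  (continuous_cos.continuousAt.mul (hasDerivAt_tan_const_sub hc).continuousAt).sub
    (continuous_sin.continuousAt.div (by fun_prop) (pow_ne_zero 2 hc))

-- `bemResidual`, `bemDenom` and `bemStep` are the functions `g`, `D` and `f` of the introduction.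
noncomputable def bemResidual (θ : ℝ) (μL μD : ℝ → ℝ) (φ : ℝ) : ℝ :=
  muG θ φ - μL φ + tan (θ - φ) * μD φ

noncomputable def bemResidualDeriv (θ : ℝ) (μL' μD μD' : ℝ → ℝ) (φ : ℝ) : ℝ :=
  muGderiv θ φ - μL' φ + (-(1 + tan (θ - φ) ^ 2) * μD φ + tan (θ - φ) * μD' φ)

noncomputable def bemDenom (θ M : ℝ) (μD : ℝ → ℝ) (φ : ℝ) : ℝ :=
  max 0 (-(muGderiv θ φ)) + M + (1 + tan θ ^ 2) * μD φ

noncomputable def bemStep (θ M ε : ℝ) (μL μD : ℝ → ℝ) (φ : ℝ) : ℝ :=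
  φ + ε / bemDenom θ M μD φ * bemResidual θ μL μD φ

section BEM

variable {θ M ε φ : ℝ} {μL μD μL' μD' : ℝ → ℝ}

theorem bemResidual_eq_zero_iff :
    bemResidual θ μL μD φ = 0 ↔ μL φ - tan (θ - φ) * μD φ = muG θ φ := by
  rw [bemResidual]
  constructor <;> intro h <;> linarith

theorem bemResidual_self : bemResidual θ μL μD θ = -μL θ := by
  simp [bemResidual, muG]

theorem hasDerivAt_bemResidual (hc : cos (θ - φ) ≠ 0) (hL : HasDerivAt μL (μL' φ) φ)
    (hD : HasDerivAt μD (μD' φ) φ) :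
    HasDerivAt (bemResidual θ μL μD) (bemResidualDeriv θ μL' μD μD' φ) φ :=
  ((hasDerivAt_muG hc).sub hL).add ((hasDerivAt_tan_const_sub hc).mul hD)

theorem neg_bemResidualDeriv_le_bemDenom {ξ : ℝ} (hθ : θ < π / 2) (hξ : 0 ≤ ξ) (hξφ : ξ ≤ φ)
    (hφ : φ ≤ θ) (hL' : μL' ξ ≤ M) (hD' : 0 ≤ μD' ξ) (hDξ : 0 ≤ μD ξ) (hDle : μD ξ ≤ μD φ) :
    -bemResidualDeriv θ μL' μD μD' ξ ≤ bemDenom θ M μD φ := by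
  have hG : -muGderiv θ ξ ≤ max 0 (-muGderiv θ φ) :=
    (neg_le_neg (antitoneOn_muGderiv hθ ⟨hξ, hξφ.trans hφ⟩ ⟨hξ.trans hξφ, hφ⟩ hξφ)).trans
      (le_max_right _ _)
  obtain ⟨htan0, htan⟩ := tan_const_sub_mem_Icc hθ hξ (hξφ.trans hφ)
  have hsq : (1 + tan (θ - ξ) ^ 2) * μD ξ ≤ (1 + tan θ ^ 2) * μD φ :=
    mul_le_mul (by gcongr) hDle hDξ (by positivity)
  have := mul_nonneg htan0 hD'
  rw [bemResidualDeriv, bemDenom]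
  linarith

theorem bemStep_eq_self_iff (hε : ε ≠ 0) (hden : bemDenom θ M μD φ ≠ 0) :
    bemStep θ M ε μL μD φ = φ ↔ bemResidual θ μL μD φ = 0 := by
  rw [bemStep, add_eq_left, mul_eq_zero, or_iff_right (div_ne_zero hε hden)]

theorem continuousOn_bemStep (hθ : θ < π / 2) (hμLd : ∀ φ ∈ Ioc 0 θ, HasDerivAt μL (μL' φ) φ)
    (hμDd : ∀ φ ∈ Ioc 0 θ, HasDerivAt μD (μD' φ) φ)
    (hden : ∀ φ ∈ Ioc 0 θ, bemDenom θ M μD φ ≠ 0) :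
    ContinuousOn (bemStep θ M ε μL μD) (Ioc 0 θ) := fun φ hφ => by
  have hc := (cos_const_sub_pos hθ hφ.1.le hφ.2).ne'
  have hdenc : ContinuousAt (bemDenom θ M μD) φ :=
    ((continuousAt_const.max (continuousAt_muGderiv hc).neg).add continuousAt_const).add
      (continuousAt_const.mul (hμDd φ hφ).continuousAt)
  exact (continuousAt_id.add ((continuousAt_const.div hdenc (hden φ hφ)).mul
    (hasDerivAt_bemResidual hc (hμLd φ hφ) (hμDd φ hφ)).continuousAt)).continuousWithinAt

theorem bemStep_mem_Icc {φs : ℝ} (hθ : θ < π / 2) (hε : ε ∈ Icc 0 1)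
    (hμLd : ∀ φ ∈ Ioc 0 θ, HasDerivAt μL (μL' φ) φ)
    (hμDd : ∀ φ ∈ Ioc 0 θ, HasDerivAt μD (μD' φ) φ) (hμDnn : ∀ φ ∈ Ioc 0 θ, 0 ≤ μD φ)
    (hμDmono : MonotoneOn μD (Ioc 0 θ)) (hM : ∀ φ ∈ Ioc 0 θ, μL' φ ≤ M)
    (hden : ∀ φ ∈ Ioc 0 θ, 0 < bemDenom θ M μD φ) (hφs : 0 < φs)
    (hgφs : bemResidual θ μL μD φs = 0) (hgle : ∀ φ ∈ Icc φs θ, bemResidual θ μL μD φ ≤ 0) :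
    ∀ φ ∈ Icc φs θ, bemStep θ M ε μL μD φ ∈ Icc φs φ := by
  intro φ hφ
  have hsub : Icc φs φ ⊆ Ioc 0 θ := fun ξ hξ => ⟨hφs.trans_le hξ.1, hξ.2.trans hφ.2⟩
  have hφ' : φ ∈ Ioc 0 θ := hsub (right_mem_Icc.2 hφ.1)
  have hg : ∀ ξ ∈ Icc φs φ, HasDerivAt (bemResidual θ μL μD) (bemResidualDeriv θ μL' μD μD' ξ) ξ :=
    fun ξ hξ => hasDerivAt_bemResidual (cos_const_sub_pos hθ (hsub hξ).1.le (hsub hξ).2).ne'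
      (hμLd ξ (hsub hξ)) (hμDd ξ (hsub hξ))
  refine add_mul_mem_Icc_of_neg_deriv_le (C := bemDenom θ M μD φ) hφ.1
    (fun ξ hξ => (hg ξ hξ).continuousAt.continuousWithinAt)
    (fun ξ hξ => hg ξ (Ioo_subset_Icc_self hξ)) (fun ξ hξ => ?_) hgφs (hgle φ hφ)
    (div_nonneg hε.1 (hden φ hφ').le) ?_
  · have hξ' : ξ ∈ Ioo 0 θ := ⟨hφs.trans hξ.1, hξ.2.trans_le hφ.2⟩
    have hξc := Ioo_subset_Ioc_self hξ'
    exact neg_bemResidualDeriv_le_bemDenom hθ hξ'.1.le hξ.2.le hφ.2 (hM ξ hξc)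
      ((hμDd ξ hξc).hasDerivWithinAt.nonneg_of_monotoneOn (isOpen_Ioo.preperfect ξ hξ')
        (hμDmono.mono Ioo_subset_Ioc_self))
      (hμDnn ξ hξc) (hμDmono hξc hφ' hξ.2.le)
  · rw [div_mul_cancel₀ _ (hden φ hφ').ne']
    exact hε.2

end BEM

theorem bem_fixed_point_convergence_general
    (θ : ℝ) (hθ : θ ∈ Ioo 0 (π / 2))
    (μL μD μL' μD' : ℝ → ℝ)
    (hμLd : ∀ φ ∈ Ioc 0 θ, HasDerivAt μL (μL' φ) φ)
    (hμDd : ∀ φ ∈ Ioc 0 θ, HasDerivAt μD (μD' φ) φ)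
    (hμLnn : ∀ φ ∈ Ioc 0 θ, 0 ≤ μL φ) (hμDnn : ∀ φ ∈ Ioc 0 θ, 0 ≤ μD φ)
    (hμDmono : MonotoneOn μD (Ioc 0 θ))
    (M : ℝ) (hM : IsLUB (μL' '' Ioc 0 θ) M)
    (hD : ∀ φ ∈ Ioc 0 θ,
      0 < max 0 (-(muGderiv θ φ)) + M + (1 + Real.tan θ ^ 2) * μD φ)
    (ε : ℝ) (hε : ε ∈ Ioo (0 : ℝ) 1)
    (seq : ℕ → ℝ) (hseq0 : seq 0 = θ)
    (hseqrec : ∀ k : ℕ, seq (k + 1)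
      = seq k +
        (ε / (max 0 (-(muGderiv θ (seq k))) + M + (1 + Real.tan θ ^ 2) * μD (seq k))) *
          (muG θ (seq k) - μL (seq k) + Real.tan (θ - seq k) * μD (seq k)))
    (hS : ∃ φ ∈ Ioc 0 θ, μL φ - Real.tan (θ - φ) * μD φ = muG θ φ) :
    ∃ φs, IsGreatest {φ ∈ Ioc 0 θ | μL φ - Real.tan (θ - φ) * μD φ = muG θ φ} φs ∧
      (∀ k : ℕ, seq k ∈ Icc φs θ) ∧
      Filter.Tendsto seq Filter.atTop (nhds φs) := by
  obtain ⟨hθ0, hθ⟩ := hθ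
  have hden : ∀ φ ∈ Ioc 0 θ, 0 < bemDenom θ M μD φ := hD
  have hgc : ContinuousOn (bemResidual θ μL μD) (Ioc 0 θ) := fun φ hφ =>
    (hasDerivAt_bemResidual (cos_const_sub_pos hθ hφ.1.le hφ.2).ne' (hμLd φ hφ)
      (hμDd φ hφ)).continuousAt.continuousWithinAt
  simp only [← bemResidual_eq_zero_iff] at hS ⊢
  obtain ⟨φs, ⟨⟨hφs0, hφsθ⟩, hgφs⟩, hφs_max⟩ := hgc.exists_isGreatest_zero hS
  have hsub : Icc φs θ ⊆ Ioc 0 θ := fun φ hφ => ⟨hφs0.trans_le hφ.1, hφ.2⟩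
  have hgle : ∀ φ ∈ Icc φs θ, bemResidual θ μL μD φ ≤ 0 :=
    (hgc.mono hsub).nonpos_of_ne_zero hgφs.le
      (by simpa [bemResidual_self] using hμLnn θ ⟨hθ0, le_rfl⟩)
      fun ψ hψ hgψ => (hφs_max ⟨hsub (Ioc_subset_Icc_self hψ), hgψ⟩).not_gt hψ.1
  have hmaps := bemStep_mem_Icc (ε := ε) hθ (Ioo_subset_Icc_self hε) hμLd hμDd hμDnn hμDmono
    (fun φ hφ => hM.1 ⟨φ, hφ, rfl⟩) hden hφs0 hgφs hgle
  have hfix : ∀ φ ∈ Icc φs θ, bemStep θ M ε μL μD φ = φ → φ = φs := fun φ hφ hFφ =>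
    le_antisymm (hφs_max ⟨hsub hφ, (bemStep_eq_self_iff hε.1.ne' (hden φ (hsub hφ)).ne').1 hFφ⟩)
      hφ.1
  have hseq : seq = fun n => (bemStep θ M ε μL μD)^[n] θ := by
    funext n
    induction n with
    | zero => exact hseq0
    | succ n ih => rw [hseqrec, Function.iterate_succ_apply', ← ih]; rfl
  subst hseq
  exact ⟨φs, ⟨⟨⟨hφs0, hφsθ⟩, hgφs⟩, hφs_max⟩,
    iterate_mem_Icc_of_apply_mem_Icc hmaps ⟨hφsθ, le_rfl⟩,
    tendsto_iterate_of_apply_mem_Icc hmaps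
      ((continuousOn_bemStep hθ hμLd hμDd fun φ hφ => (hden φ hφ).ne').mono hsub) hfix
      ⟨hφsθ, le_rfl⟩⟩

/-- Convergence of the damped fixed-point iteration
`φ^{k+1} = φ^k + ρ_ε(φ^k)(μ_G(φ^k) − μ_L(φ^k) + tan(θ − φ^k) μ_D(φ^k))`, `φ⁰ = θ_λ`,
where `ρ_ε(φ) = ε / (max{0, −μ_G'(φ)} + M + (1 + tan²θ) μ_D(φ))`: the iterates remain in
`[φ*, θ_λ]` and converge to the largest solution `φ*`. -/
theorem bem_fixed_point_convergence
    (lam θ : ℝ) (hlam : 0 < lam) (hθ : θ ∈ Ioo 0 (π / 2))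
    (htan : Real.tan θ = 1 / lam)
    (μL μD μL' μD' : ℝ → ℝ)
    (hμLd : ∀ φ ∈ Ioc 0 θ, HasDerivAt μL (μL' φ) φ)
    (hμDd : ∀ φ ∈ Ioc 0 θ, HasDerivAt μD (μD' φ) φ)
    (hμL'c : ContinuousOn μL' (Ioc 0 θ)) (hμD'c : ContinuousOn μD' (Ioc 0 θ))
    (hμLnn : ∀ φ ∈ Ioc 0 θ, 0 ≤ μL φ) (hμDnn : ∀ φ ∈ Ioc 0 θ, 0 ≤ μD φ)
    (hμLmono : MonotoneOn μL (Ioc 0 θ)) (hμDmono : MonotoneOn μD (Ioc 0 θ))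
    (M : ℝ) (hM : IsLUB (μL' '' Ioc 0 θ) M)
    (hD : ∀ φ ∈ Ioc 0 θ,
      0 < max 0 (-(muGderiv θ φ)) + M + (1 + Real.tan θ ^ 2) * μD φ)
    (ε : ℝ) (hε : ε ∈ Ioo (0 : ℝ) 1)
    (seq : ℕ → ℝ) (hseq0 : seq 0 = θ)
    (hseqrec : ∀ k : ℕ, seq (k + 1)
      = seq k +
        (ε / (max 0 (-(muGderiv θ (seq k))) + M + (1 + Real.tan θ ^ 2) * μD (seq k))) *
          (muG θ (seq k) - μL (seq k) + Real.tan (θ - seq k) * μD (seq k)))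
    (hS : ∃ φ ∈ Ioc 0 θ, μL φ - Real.tan (θ - φ) * μD φ = muG θ φ) :
    ∃ φs, IsGreatest {φ ∈ Ioc 0 θ | μL φ - Real.tan (θ - φ) * μD φ = muG θ φ} φs ∧
      (∀ k : ℕ, seq k ∈ Icc φs θ) ∧
      Filter.Tendsto seq Filter.atTop (nhds φs) :=
  bem_fixed_point_convergence_general θ hθ μL μD μL' μD' hμLd hμDd hμLnn hμDnn hμDmono M hM hD ε hε
    seq hseq0 hseqrec hS
end

section
/- Let λ > 0 with θ_λ ∈ (0, π/2) defined by tan θ_λ = 1/λ, let γ_λ ∈ (0, θ_λ), and let μ_L : [γ_λ, θ_λ] → [0, ∞) be continuous, non-negative and non-decreasing with μ_L(θ_λ) ≤ μ_G(γ_λ). Then the interval [γ_λ, θ_λ] is invariant under the iteration φ^{k+1} = f̃(φ^k): for every φ⁰ ∈ [γ_λ, θ_λ] and every k ∈ ℕ, φ^k ∈ [γ_λ, θ_λ]. -/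
open Real Set

/-- The function `h(x) = (λ cot x + 1)/sin x`. -/
noncomputable def hBEM (lam x : ℝ) : ℝ :=
  (lam * (Real.cos x / Real.sin x) + 1) / Real.sin x

/-- The fixed-point map of the usual BEM algorithm for the simplified model:
`f̃(x) = π/2 − arctan(λ + μ_L(x) h(x))`. -/
noncomputable def fBEM (lam : ℝ) (μL : ℝ → ℝ) (x : ℝ) : ℝ :=
  Real.pi / 2 - Real.arctan (lam + μL x * hBEM lam x)


lemma bem_step (lam θ γ : ℝ) (hlam : 0 < lam) (hθ : θ ∈ Ioo 0 (π / 2))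
    (htan : Real.tan θ = 1 / lam) (hγ : γ ∈ Ioo 0 θ)
    (m : ℝ) (hm0 : 0 ≤ m) (hm1 : m ≤ Real.sin γ * Real.tan (θ - γ))
    (x : ℝ) (hx : x ∈ Icc γ θ) :
    π / 2 - Real.arctan (lam + m * hBEM lam x) ∈ Icc γ θ := by
  obtain ⟨hθ0, hθπ⟩ := hθ
  obtain ⟨hγ0, hγθ⟩ := hγ
  have hx0 : 0 < x := lt_of_lt_of_le hγ0 hx.1
  have hxπ : x < π / 2 := lt_of_le_of_lt hx.2 hθπ
  have hsx : 0 < Real.sin x := Real.sin_pos_of_pos_of_lt_pi hx0 (by linarith [Real.pi_pos])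
  have hcx : 0 < Real.cos x := Real.cos_pos_of_mem_Ioo ⟨by linarith [Real.pi_pos], hxπ⟩
  have hsγ : 0 < Real.sin γ := Real.sin_pos_of_pos_of_lt_pi hγ0 (by linarith [Real.pi_pos])
  have hcγ : 0 < Real.cos γ := Real.cos_pos_of_mem_Ioo ⟨by linarith [Real.pi_pos], by linarith⟩
  have hsθ : 0 < Real.sin θ := Real.sin_pos_of_pos_of_lt_pi hθ0 (by linarith [Real.pi_pos])
  have hcθ : 0 < Real.cos θ := Real.cos_pos_of_mem_Ioo ⟨by linarith [Real.pi_pos], hθπ⟩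
  have hsd : 0 < Real.sin (θ - γ) := Real.sin_pos_of_pos_of_lt_pi (by linarith) (by linarith [Real.pi_pos])
  have hcd : 0 < Real.cos (θ - γ) := Real.cos_pos_of_mem_Ioo ⟨by linarith [Real.pi_pos], by linarith⟩
  have hcθeq : Real.cos θ = lam * Real.sin θ := by
    have := htan
    rw [Real.tan_eq_sin_div_cos] at this
    field_simp at this
    linarith
  -- h nonneg and h x ≤ h γ
  have hh0 : 0 ≤ hBEM lam x := by
    unfold hBEM
    positivity
  have hhle : hBEM lam x ≤ hBEM lam γ := by
    unfold hBEM
    have hs : Real.sin γ ≤ Real.sin x := by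
      apply Real.sin_le_sin_of_le_of_le_pi_div_two (by linarith) (le_of_lt hxπ) hx.1
    have hc : Real.cos x ≤ Real.cos γ := by
      apply Real.cos_le_cos_of_nonneg_of_le_pi (le_of_lt hγ0) (by linarith [Real.pi_pos]) hx.1
    apply div_le_div₀ (by positivity) _ hsγ hs
    have : Real.cos x / Real.sin x ≤ Real.cos γ / Real.sin γ :=
      div_le_div₀ (le_of_lt hcγ) hc hsγ hs
    nlinarith
  -- arctan lam = π/2 - θ
  have harctanlam : Real.arctan lam = π / 2 - θ := by
    have h1 : Real.arctan (lam⁻¹) = π / 2 - Real.arctan lam := Real.arctan_inv_of_pos hlam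
    have h2 : Real.arctan (Real.tan θ) = θ := Real.arctan_tan (by linarith [Real.pi_pos]) hθπ
    rw [htan, one_div] at h2
    linarith [h1, h2]
  have hmh0 : 0 ≤ m * hBEM lam x := mul_nonneg hm0 hh0
  constructor
  · -- lower bound: need arctan(lam + m h) ≤ π/2 - γ
    have key : lam + Real.sin γ * Real.tan (θ - γ) * hBEM lam γ = (Real.tan γ)⁻¹ := by
      unfold hBEM
      rw [Real.tan_eq_sin_div_cos, Real.tan_eq_sin_div_cos, Real.sin_sub, Real.cos_sub]
      have hden : 0 < Real.cos θ * Real.cos γ + Real.sin θ * Real.sin γ := by positivity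
      rw [hcθeq]
      field_simp
      ring
    have hchain : lam + m * hBEM lam x ≤ (Real.tan γ)⁻¹ := by
      rw [← key]
      have : m * hBEM lam x ≤ Real.sin γ * Real.tan (θ - γ) * hBEM lam γ := by
        apply mul_le_mul hm1 hhle hh0
        have : 0 < Real.tan (θ - γ) := by
          rw [Real.tan_eq_sin_div_cos]; positivity
        positivity
      linarith
    have : Real.arctan (lam + m * hBEM lam x) ≤ Real.arctan ((Real.tan γ)⁻¹) :=
      Real.arctan_strictMono.monotone hchain
    have h2 : Real.arctan ((Real.tan γ)⁻¹) = π / 2 - γ := by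
      rw [← Real.tan_pi_div_two_sub, Real.arctan_tan (by linarith) (by linarith)]
    linarith
  · have : Real.arctan lam ≤ Real.arctan (lam + m * hBEM lam x) :=
      Real.arctan_strictMono.monotone (by linarith)
    rw [harctanlam] at this
    linarith

/-- Invariance of `[γ_λ, θ_λ]` under the usual BEM iteration
`φ^{k+1} = f̃(φ^k)`, assuming `μ_L(θ_λ) ≤ μ_G(γ_λ)`. -/
theorem bem_usual_iteration_stability
    (lam θ γ : ℝ) (hlam : 0 < lam) (hθ : θ ∈ Ioo 0 (π / 2))
    (htan : Real.tan θ = 1 / lam) (hγ : γ ∈ Ioo 0 θ)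
    (μL : ℝ → ℝ)
    (hμLc : ContinuousOn μL (Icc γ θ))
    (hμLnn : ∀ φ ∈ Icc γ θ, 0 ≤ μL φ)
    (hμLmono : MonotoneOn μL (Icc γ θ))
    (hstab : μL θ ≤ Real.sin γ * Real.tan (θ - γ))
    (seq : ℕ → ℝ) (hseq0 : seq 0 ∈ Icc γ θ)
    (hseqrec : ∀ k : ℕ, seq (k + 1) = fBEM lam μL (seq k)) :
    ∀ k : ℕ, seq k ∈ Icc γ θ := by
  intro k
  induction k with
  | zero => exact hseq0
  | succ n ih =>
    rw [hseqrec n]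
    unfold fBEM
    have hθI : θ ∈ Icc γ θ := ⟨le_of_lt hγ.2, le_refl θ⟩
    exact bem_step lam θ γ hlam hθ htan hγ (μL (seq n)) (hμLnn _ ih)
      (le_trans (hμLmono ih hθI ih.2) hstab) (seq n) ih
end

section
/- Let λ > 0 with θ_λ ∈ (0, π/2) defined by tan θ_λ = 1/λ, let γ_λ ∈ (0, θ_λ), and let μ_L : (γ_λ, θ_λ) → [0, ∞) be differentiable with μ_L ≥ 0 and μ_L' ≥ 0, and with M_1 := sup_{(γ_λ,θ_λ)} μ_L' < ∞ and M_0 := sup_{(γ_λ,θ_λ)} μ_L < ∞. Then for every φ ∈ (γ_λ, θ_λ), the derivative of f̃ satisfies −sin θ_λ · M_1 · h(γ_λ) ≤ f̃'(φ) ≤ sin θ_λ · M_0 · |h'(γ_λ)|. -/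
/-!
`f̃' = (μ_L · (−h') − μ_L' · h) / (1 + (λ + μ_L h)²)`. For `λ ≥ 0`, on `(0, π/2)` the function `h`
is positive and decreasing while `h'` is negative and increasing (`h'' ≥ 0`), so on `(γ, θ)`
both `0 ≤ μ_L' h ≤ M₁ h(γ)` and `0 ≤ μ_L (−h') ≤ M₀ |h'(γ)|`. The denominator is at least
`1 + λ² = 1 / sin² θ_λ`, and `sin² θ_λ ≤ sin θ_λ`.
-/

open Real Set

noncomputable def hBEMDeriv (lam x : ℝ) : ℝ :=
  -(lam * (1 + cos x ^ 2) + sin x * cos x) / sin x ^ 3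

lemma hasDerivAt_hBEM (lam : ℝ) {x : ℝ} (hx : sin x ≠ 0) :
    HasDerivAt (hBEM lam) (hBEMDeriv lam x) x := by
  have hcot : HasDerivAt (fun y ↦ cos y / sin y) _ x :=
    (hasDerivAt_cos x).div (hasDerivAt_sin x) hx
  refine (((hcot.const_mul lam).add_const 1).div (hasDerivAt_sin x) hx).congr_deriv ?_
  unfold hBEMDeriv
  field_simp
  linear_combination (-lam) * sin_sq_add_cos_sq x

lemma hasDerivAt_hBEMDeriv (lam : ℝ) {x : ℝ} (hx : sin x ≠ 0) :
    HasDerivAt (hBEMDeriv lam)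
      ((2 * lam * sin x ^ 2 * cos x + 3 * lam * cos x * (1 + cos x ^ 2)
        + 2 * sin x * cos x ^ 2 + sin x ^ 3) / sin x ^ 4) x := by
  have hnum := (((((hasDerivAt_cos x).pow 2).const_add 1).const_mul lam).add
    ((hasDerivAt_sin x).mul (hasDerivAt_cos x))).neg
  refine (hnum.div ((hasDerivAt_sin x).pow 3) (pow_ne_zero 3 hx)).congr_deriv ?_
  simp only [Pi.neg_apply, Pi.add_apply, Pi.mul_apply, Pi.pow_apply]
  field_simp
  ring

section FirstQuadrant

variable {lam x : ℝ}

lemma sin_pos_of_mem_Ioo_zero_pi_div_two (hx : x ∈ Ioo 0 (π / 2)) : 0 < sin x :=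
  sin_pos_of_pos_of_lt_pi hx.1 (hx.2.trans (half_lt_self pi_pos))

lemma cos_pos_of_mem_Ioo_zero_pi_div_two (hx : x ∈ Ioo 0 (π / 2)) : 0 < cos x :=
  cos_pos_of_mem_Ioo ⟨(neg_neg_of_pos (half_pos pi_pos)).trans hx.1, hx.2⟩

lemma hBEM_pos (hlam : 0 ≤ lam) (hx : x ∈ Ioo 0 (π / 2)) : 0 < hBEM lam x := by
  have := sin_pos_of_mem_Ioo_zero_pi_div_two hx
  have := cos_pos_of_mem_Ioo_zero_pi_div_two hx
  unfold hBEM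
  positivity

lemma hBEMDeriv_neg (hlam : 0 ≤ lam) (hx : x ∈ Ioo 0 (π / 2)) : hBEMDeriv lam x < 0 := by
  have := sin_pos_of_mem_Ioo_zero_pi_div_two hx
  have := cos_pos_of_mem_Ioo_zero_pi_div_two hx
  unfold hBEMDeriv
  rw [neg_div, neg_lt_zero]
  positivity

lemma antitoneOn_hBEM (hlam : 0 ≤ lam) : AntitoneOn (hBEM lam) (Ioo 0 (π / 2)) := by
  have hderiv : ∀ x ∈ Ioo 0 (π / 2), HasDerivAt (hBEM lam) (hBEMDeriv lam x) x :=
    fun x hx ↦ hasDerivAt_hBEM lam (sin_pos_of_mem_Ioo_zero_pi_div_two hx).ne'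
  refine antitoneOn_of_hasDerivWithinAt_nonpos (f' := hBEMDeriv lam) (convex_Ioo _ _)
    (fun x hx ↦ (hderiv x hx).continuousAt.continuousWithinAt) ?_ ?_ <;>
    rw [interior_Ioo]
  · exact fun x hx ↦ (hderiv x hx).hasDerivWithinAt
  · exact fun x hx ↦ (hBEMDeriv_neg hlam hx).le

lemma monotoneOn_hBEMDeriv (hlam : 0 ≤ lam) : MonotoneOn (hBEMDeriv lam) (Ioo 0 (π / 2)) := by
  have hderiv := fun x (hx : x ∈ Ioo 0 (π / 2)) ↦
    hasDerivAt_hBEMDeriv lam (sin_pos_of_mem_Ioo_zero_pi_div_two hx).ne'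
  refine monotoneOn_of_hasDerivWithinAt_nonneg (convex_Ioo _ _)
    (f' := fun x ↦ (2 * lam * sin x ^ 2 * cos x + 3 * lam * cos x * (1 + cos x ^ 2)
        + 2 * sin x * cos x ^ 2 + sin x ^ 3) / sin x ^ 4)
    (fun x hx ↦ (hderiv x hx).continuousAt.continuousWithinAt) ?_ ?_ <;>
    rw [interior_Ioo]
  · exact fun x hx ↦ (hderiv x hx).hasDerivWithinAt
  · intro x hx
    have := sin_pos_of_mem_Ioo_zero_pi_div_two hx
    have := cos_pos_of_mem_Ioo_zero_pi_div_two hx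
    positivity

end FirstQuadrant

lemma hasDerivAt_fBEM {lam x μ' : ℝ} {μL : ℝ → ℝ} (hμL : HasDerivAt μL μ' x) (hx : sin x ≠ 0) :
    HasDerivAt (fBEM lam μL)
      ((μL x * -hBEMDeriv lam x - μ' * hBEM lam x) / (1 + (lam + μL x * hBEM lam x) ^ 2)) x := by
  have hg := (hμL.mul (hasDerivAt_hBEM lam hx)).const_add lam
  refine ((hasDerivAt_arctan _).comp x hg).const_sub (π / 2) |>.congr_deriv ?_
  simp only [Pi.mul_apply]
  ring

lemma sin_sq_eq_inv_one_add_sq_of_tan_eq_inv {θ lam : ℝ} (hcos : cos θ ≠ 0) (hlam : lam ≠ 0)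
    (htan : tan θ = 1 / lam) : sin θ ^ 2 = (1 + lam ^ 2)⁻¹ := by
  rw [← tan_sq_div_one_add_tan_sq hcos, htan]
  field_simp
  ring

lemma inv_one_add_sq_le_sin {θ lam y : ℝ} (hθ : θ ∈ Ioo 0 (π / 2)) (hlam : 0 < lam)
    (htan : tan θ = 1 / lam) (hy : lam ≤ y) : (1 + y ^ 2)⁻¹ ≤ sin θ :=
  calc (1 + y ^ 2)⁻¹ ≤ (1 + lam ^ 2)⁻¹ := by gcongr
    _ = sin θ ^ 2 :=
      (sin_sq_eq_inv_one_add_sq_of_tan_eq_inv (cos_pos_of_mem_Ioo_zero_pi_div_two hθ).ne'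
        hlam.ne' htan).symm
    _ ≤ sin θ := pow_le_of_le_one (sin_pos_of_mem_Ioo_zero_pi_div_two hθ).le (sin_le_one θ)
        two_ne_zero

lemma neg_mul_le_sub_div_and_sub_div_le_mul {A B a b s D : ℝ} (hA : 0 ≤ A) (hAa : A ≤ a)
    (hB : 0 ≤ B) (hBb : B ≤ b) (hD : 0 < D) (hs : D⁻¹ ≤ s) :
    -(s * a) ≤ (B - A) / D ∧ (B - A) / D ≤ s * b := by
  have hs0 : 0 ≤ s := (inv_nonneg.2 hD.le).trans hs
  rw [div_eq_mul_inv]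
  constructor
  · calc -(s * a) ≤ -(D⁻¹ * A) := by rw [neg_le_neg_iff]; exact mul_le_mul hs hAa hA hs0
      _ ≤ (B - A) * D⁻¹ := by nlinarith [inv_nonneg.2 hD.le]
  · calc (B - A) * D⁻¹ ≤ D⁻¹ * B := by nlinarith [inv_nonneg.2 hD.le]
      _ ≤ s * b := mul_le_mul hs hBb hB hs0

/-- Bounds on the derivative of the usual BEM fixed-point map:
`−sin θ_λ · M₁ · h(γ_λ) ≤ f̃'(φ) ≤ sin θ_λ · M₀ · |h'(γ_λ)|` on `(γ_λ, θ_λ)`, where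
`M₁ = sup μ_L'` and `M₀ = sup μ_L` on `(γ_λ, θ_λ)`. -/
theorem bem_usual_iteration_derivative_bounds
    (lam θ γ : ℝ) (hlam : 0 < lam) (hθ : θ ∈ Ioo 0 (π / 2))
    (htan : Real.tan θ = 1 / lam) (hγ : γ ∈ Ioo 0 θ)
    (μL μL' : ℝ → ℝ)
    (hμLd : ∀ x ∈ Ioo γ θ, HasDerivAt μL (μL' x) x)
    (hμLnn : ∀ x ∈ Ioo γ θ, 0 ≤ μL x)
    (hμL'nn : ∀ x ∈ Ioo γ θ, 0 ≤ μL' x)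
    (M₁ M₀ : ℝ)
    (hM₁ : IsLUB (μL' '' Ioo γ θ) M₁)
    (hM₀ : IsLUB (μL '' Ioo γ θ) M₀) :
    ∀ φ ∈ Ioo γ θ,
      -(Real.sin θ * M₁ * hBEM lam γ) ≤ deriv (fBEM lam μL) φ ∧
      deriv (fBEM lam μL) φ ≤ Real.sin θ * M₀ * |deriv (hBEM lam) γ| := by
  intro φ hφ
  have hγ' : γ ∈ Ioo 0 (π / 2) := ⟨hγ.1, hγ.2.trans hθ.2⟩
  have hφ' : φ ∈ Ioo 0 (π / 2) := Ioo_subset_Ioo hγ.1.le hθ.2.le hφ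
  rw [(hasDerivAt_fBEM (hμLd φ hφ) (sin_pos_of_mem_Ioo_zero_pi_div_two hφ').ne').deriv,
    (hasDerivAt_hBEM lam (sin_pos_of_mem_Ioo_zero_pi_div_two hγ').ne').deriv,
    abs_of_neg (hBEMDeriv_neg hlam.le hγ'), mul_assoc, mul_assoc]
  have hh := hBEM_pos hlam.le hφ'
  have hh' := hBEMDeriv_neg hlam.le hφ'
  have hμ := hμLnn φ hφ
  have hμ' := hμL'nn φ hφ
  have hμM₀ : μL φ ≤ M₀ := hM₀.1 ⟨φ, hφ, rfl⟩
  have hμ'M₁ : μL' φ ≤ M₁ := hM₁.1 ⟨φ, hφ, rfl⟩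
  refine neg_mul_le_sub_div_and_sub_div_le_mul (mul_nonneg hμ' hh.le) ?_
    (mul_nonneg hμ (neg_nonneg.2 hh'.le)) ?_ (by positivity)
    (inv_one_add_sq_le_sin hθ hlam htan (le_add_of_nonneg_right (mul_nonneg hμ hh.le)))
  · exact mul_le_mul hμ'M₁ (antitoneOn_hBEM hlam.le hγ' hφ' hφ.1.le) hh.le (hμ'.trans hμ'M₁)
  · exact mul_le_mul hμM₀ (neg_le_neg (monotoneOn_hBEMDeriv hlam.le hγ' hφ' hφ.1.le))
      (neg_nonneg.2 hh'.le) (hμ.trans hμM₀)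
end

section
/- Let θ ∈ (0, π/2). Then the function φ ↦ sin² φ · sin(2(θ − φ)) on the interval [0, θ] attains its maximum at φ* = (2/3)θ and only there: for every φ ∈ [0, θ] one has sin² φ · sin(2(θ − φ)) ≤ sin²(2θ/3) · sin(2θ/3), with equality if and only if φ = 2θ/3. -/
open Real Set

/-- Product-to-square identity: `sin u · sin v = sin²((u+v)/2) − (1 − cos(u−v))/2`. -/
lemma bem_prod_sin_eq (u v : ℝ) :
    Real.sin u * Real.sin v
      = Real.sin ((u + v) / 2) ^ 2 - (1 - Real.cos (u - v)) / 2 := by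
  have h1 : Real.sin ((u + v) / 2) ^ 2 = 1 / 2 - Real.cos (u + v) / 2 := by
    rw [Real.sin_sq, Real.cos_sq]
    ring_nf
  have h2 := Real.cos_add u v
  have h3 := Real.cos_sub u v
  linarith

lemma bem_prod_sin_le (u v : ℝ) :
    Real.sin u * Real.sin v ≤ Real.sin ((u + v) / 2) ^ 2 := by
  have h := bem_prod_sin_eq u v
  have hc : Real.cos (u - v) ≤ 1 := Real.cos_le_one _
  linarith

/-- For `θ ∈ (0, π/2)`, the function `φ ↦ sin²φ · sin(2(θ − φ))` on
`[0, θ]` attains its maximum at `φ* = (2/3)θ` and only there. -/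
theorem bem_optimal_angle (θ : ℝ) (hθ : θ ∈ Ioo 0 (π / 2)) :
    ∀ φ ∈ Icc 0 θ,
      Real.sin φ ^ 2 * Real.sin (2 * (θ - φ))
        ≤ Real.sin (2 * θ / 3) ^ 2 * Real.sin (2 * θ / 3) ∧
      (Real.sin φ ^ 2 * Real.sin (2 * (θ - φ))
          = Real.sin (2 * θ / 3) ^ 2 * Real.sin (2 * θ / 3) ↔ φ = 2 * θ / 3) := by
  obtain ⟨hθ0, hθπ⟩ := hθ
  have hπ := Real.pi_pos
  intro φ ⟨hφ0, hφθ⟩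
  set s : ℝ := 2 * θ / 3 with hs_def
  set a : ℝ := θ - φ / 2 with ha_def
  have hs0 : 0 < s := by positivity
  have hsπ : s < π / 2 := by linarith
  have hss : 0 < Real.sin s := Real.sin_pos_of_pos_of_lt_pi hs0 (by linarith)
  have hsφ : 0 ≤ Real.sin φ :=
    Real.sin_nonneg_of_nonneg_of_le_pi hφ0 (by linarith)
  have hsa : 0 ≤ Real.sin a :=
    Real.sin_nonneg_of_nonneg_of_le_pi (by simp [ha_def]; linarith) (by simp [ha_def]; linarith)
  have hsc : 0 ≤ Real.sin ((φ + a) / 2) :=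
    Real.sin_nonneg_of_nonneg_of_le_pi (by simp [ha_def]; linarith) (by simp [ha_def]; linarith)
  have hsd : 0 ≤ Real.sin ((a + s) / 2) :=
    Real.sin_nonneg_of_nonneg_of_le_pi (by simp [ha_def, hs_def]; linarith)
      (by simp [ha_def, hs_def]; linarith)
  -- φ + 2a = 2θ, and the "center" combinations
  have h2 : Real.sin φ * Real.sin a ≤ Real.sin ((φ + a) / 2) ^ 2 := bem_prod_sin_le φ a
  have h3 : Real.sin a * Real.sin s ≤ Real.sin ((a + s) / 2) ^ 2 := bem_prod_sin_le a s
  have h4 : Real.sin ((φ + a) / 2) * Real.sin ((a + s) / 2) ≤ Real.sin s ^ 2 := by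
    have := bem_prod_sin_le ((φ + a) / 2) ((a + s) / 2)
    have he : ((φ + a) / 2 + (a + s) / 2) / 2 = s := by
      simp only [ha_def, hs_def]; ring
    rwa [he] at this
  -- key intermediate: sin φ · sin²a ≤ sin³ s
  have h5 : Real.sin φ * Real.sin a ^ 2 ≤ Real.sin s ^ 2 * Real.sin s := by
    nlinarith [sq_nonneg (Real.sin ((φ + a) / 2) * Real.sin ((a + s) / 2) - Real.sin s ^ 2),
      mul_nonneg hsc hsd, sq_nonneg (Real.sin s), hss.le,
      mul_le_mul h2 h3 (mul_nonneg hsa hss.le) (sq_nonneg _),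
      mul_nonneg hsφ hsa]
  -- sin φ · sin(2(θ−φ)) ≤ sin² a, with explicit defect
  have h1 : Real.sin φ * Real.sin (2 * (θ - φ))
      = Real.sin a ^ 2 - (1 - Real.cos (3 * φ - 2 * θ)) / 2 := by
    have := bem_prod_sin_eq φ (2 * (θ - φ))
    have he1 : (φ + 2 * (θ - φ)) / 2 = a := by simp only [ha_def]; ring
    have he2 : φ - 2 * (θ - φ) = 3 * φ - 2 * θ := by ring
    rwa [he1, he2] at this
  have hcle : Real.cos (3 * φ - 2 * θ) ≤ 1 := Real.cos_le_one _
  have h1le : Real.sin φ * Real.sin (2 * (θ - φ)) ≤ Real.sin a ^ 2 := by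
    rw [h1]; linarith
  have hA : Real.sin φ * (Real.sin φ * Real.sin (2 * (θ - φ)))
      ≤ Real.sin φ * Real.sin a ^ 2 := mul_le_mul_of_nonneg_left h1le hsφ
  have hmain : Real.sin φ ^ 2 * Real.sin (2 * (θ - φ)) ≤ Real.sin s ^ 2 * Real.sin s := by
    calc Real.sin φ ^ 2 * Real.sin (2 * (θ - φ))
        = Real.sin φ * (Real.sin φ * Real.sin (2 * (θ - φ))) := by ring
      _ ≤ Real.sin φ * Real.sin a ^ 2 := hA
      _ ≤ Real.sin s ^ 2 * Real.sin s := h5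
  refine ⟨hmain, ⟨fun heq => ?_, fun heq => ?_⟩⟩
  · -- equality forces φ = s
    by_contra hne
    have hφs : φ ≠ s := hne
    rcases eq_or_lt_of_le hφ0 with h0 | h0
    · -- φ = 0 gives value 0 < sin³ s
      rw [← h0] at heq
      simp at heq
      nlinarith
    · have hsφ' : 0 < Real.sin φ :=
        Real.sin_pos_of_pos_of_lt_pi h0 (by linarith)
      have hcne : Real.cos (3 * φ - 2 * θ) ≠ 1 := by
        intro hc
        have := (Real.cos_eq_one_iff_of_lt_of_lt
          (x := 3 * φ - 2 * θ) (by linarith) (by linarith)).mp hc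
        apply hφs
        simp only [hs_def]
        linarith
      have hclt : Real.cos (3 * φ - 2 * θ) < 1 := lt_of_le_of_ne hcle hcne
      have hstrict : Real.sin φ * Real.sin (2 * (θ - φ)) < Real.sin a ^ 2 := by
        rw [h1]; linarith
      have : Real.sin φ ^ 2 * Real.sin (2 * (θ - φ)) < Real.sin s ^ 2 * Real.sin s := by
        calc Real.sin φ ^ 2 * Real.sin (2 * (θ - φ))
            = Real.sin φ * (Real.sin φ * Real.sin (2 * (θ - φ))) := by ring
          _ < Real.sin φ * Real.sin a ^ 2 := mul_lt_mul_of_pos_left hstrict hsφ'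
          _ ≤ Real.sin s ^ 2 * Real.sin s := h5
      linarith [this, heq.le]
  · -- φ = s: direct computation
    rw [heq]
    have : 2 * (θ - 2 * θ / 3) = 2 * θ / 3 := by ring
    rw [this]
end

section
/- Let λ > 0 and let θ_λ ∈ (0, π/2) be the unique angle with tan θ_λ = 1/λ. Suppose φ ∈ (0, θ_λ), a ∈ ℝ with a ≠ 1, a' ∈ ℝ with a' ≠ −1, and μ ∈ ℝ satisfy: tan φ = (1 − a)/(λ(1 + a')), a/(1 − a) = μ cos φ / sin² φ, and a'/(1 − a) = μ/(λ sin φ). Then μ = sin φ · tan(θ_λ − φ), a = 1 − sin φ · cos(θ_λ − φ)/sin θ_λ, and a' = sin φ · sin(θ_λ − φ)/cos θ_λ. -/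
open Real Set

/-- Explicit solution of the simplified BEM system: if `(φ, a, a', μ)`
satisfies the three equations, then `μ = sin φ · tan(θ_λ − φ)`,
`a = 1 − sin φ · cos(θ_λ − φ)/sin θ_λ` and `a' = sin φ · sin(θ_λ − φ)/cos θ_λ`. -/
theorem bem_simplified_explicit_solution
    (lam θ φ a a' μ : ℝ) (hlam : 0 < lam) (hθ : θ ∈ Ioo 0 (π / 2))
    (htan : Real.tan θ = 1 / lam)
    (hφ : φ ∈ Ioo 0 θ) (ha : a ≠ 1) (ha' : a' ≠ -1)
    (h1 : Real.tan φ = (1 - a) / (lam * (1 + a')))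
    (h2 : a / (1 - a) = μ * Real.cos φ / Real.sin φ ^ 2)
    (h3 : a' / (1 - a) = μ / (lam * Real.sin φ)) :
    μ = Real.sin φ * Real.tan (θ - φ) ∧
    a = 1 - Real.sin φ * Real.cos (θ - φ) / Real.sin θ ∧
    a' = Real.sin φ * Real.sin (θ - φ) / Real.cos θ := by
  obtain ⟨hθ0, hθπ⟩ := hθ
  obtain ⟨hφ0, hφθ⟩ := hφ
  have hpi := Real.pi_gt_three
  have hs : 0 < Real.sin φ := Real.sin_pos_of_pos_of_lt_pi hφ0 (by linarith)
  have hc : 0 < Real.cos φ := Real.cos_pos_of_mem_Ioo ⟨by linarith, by linarith⟩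
  have hSt : 0 < Real.sin θ := Real.sin_pos_of_pos_of_lt_pi hθ0 (by linarith)
  have hCt : 0 < Real.cos θ := Real.cos_pos_of_mem_Ioo ⟨by linarith, hθπ⟩
  have hC : Real.cos θ = lam * Real.sin θ := by
    rw [Real.tan_eq_sin_div_cos] at htan
    field_simp at htan
    linarith
  have hA : (1:ℝ) - a ≠ 0 := sub_ne_zero.mpr (Ne.symm ha)
  have hA' : (1:ℝ) + a' ≠ 0 := by intro h; apply ha'; linarith
  rw [Real.tan_eq_sin_div_cos] at h1
  have E1 : Real.sin φ * (lam * (1 + a')) = (1 - a) * Real.cos φ := by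
    field_simp at h1; linarith
  have E2 : a * Real.sin φ ^ 2 = μ * Real.cos φ * (1 - a) := by
    field_simp at h2; linarith
  have E3 : a' * (lam * Real.sin φ) = μ * (1 - a) := by
    field_simp at h3; linarith
  have P : Real.sin φ ^ 2 + Real.cos φ ^ 2 = 1 := Real.sin_sq_add_cos_sq φ
  have hb2 : 1 - a = Real.sin φ * (lam * Real.cos φ + Real.sin φ) := by
    linear_combination (-(Real.cos φ))*E1 + Real.cos φ*E3 - E2 - (1-a)*P
  have hμ2 : μ * (lam * Real.cos φ + Real.sin φ)
      = Real.sin φ * (Real.cos φ - lam * Real.sin φ) := by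
    refine mul_left_cancel₀ hs.ne' ?_
    linear_combination E1 - E3 + (Real.cos φ - μ)*hb2 + lam*Real.sin φ*P
  have ha'3 : a' * lam = Real.sin φ * (Real.cos φ - lam * Real.sin φ) := by
    refine mul_right_cancel₀ hs.ne' ?_
    linear_combination E3 + μ*hb2 + Real.sin φ*hμ2
  have hden : Real.cos θ * Real.cos φ + Real.sin θ * Real.sin φ ≠ 0 := by positivity
  refine ⟨?_, ?_, ?_⟩
  · rw [Real.tan_eq_sin_div_cos, Real.sin_sub, Real.cos_sub]
    field_simp
    linear_combination Real.sin θ * hμ2 + (μ*Real.cos φ + Real.sin φ^2)*hC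
  · rw [Real.cos_sub]
    field_simp
    linear_combination (-(Real.sin θ))*hb2 + (Real.sin φ*Real.cos φ)*hC
  · rw [Real.sin_sub]
    field_simp
    linear_combination Real.sin θ*ha'3 + (a' + Real.sin φ^2)*hC
end
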